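/- arXiv:2204.01217 — 6 statements merged into one kernel-verified Lean document; each statement's English description precedes it below -/
import Mathlib

section
/- Let l ≥ 1 and let P* ⊂ ℝ^l be a compact convex polytope whose interior contains the origin, and let g : P* → ℝ be continuous and strictly positive. Then the following are equivalent: (i) for every continuous convex function φ : P* → ℝ one has 𝔇_g(φ) ≥ 0, and 𝔇_g(φ) = 0 holds if and only if φ is the restriction to P* of an affine function; (ii) for every k = 1, …, l, ∫_{P*} z_k g(z) dz = 0, where z_k denotes the k-th coordinate function. -/
open MeasureTheory Real Set Filter Topology

noncomputable section

variable {l : ℕ}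

/-- The standard pairing `⟨y,z⟩ = ∑ i, y i * z i` on `ℝ^l`. -/
def dotp (y z : Fin l → ℝ) : ℝ := ∑ i, y i * z i

/-- The Legendre dual `u*(z) = sup_y (⟨y,z⟩ − u(y))` (as a real-valued supremum). -/
def legendre (u : (Fin l → ℝ) → ℝ) (z : Fin l → ℝ) : ℝ :=
  ⨆ y : Fin l → ℝ, (dotp y z - u y)

/-- The support function `v_S(y) = sup_{z ∈ S} ⟨y,z⟩`. -/
def suppFn (S : Set (Fin l → ℝ)) (y : Fin l → ℝ) : ℝ :=
  ⨆ z : S, dotp y (z : Fin l → ℝ)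

/-- `u ∈ E¹(S)`: `u` is convex on `ℝ^l`, `u ≤ v_S + C` for some constant `C`, and
`∫_S u* dz < ∞`. -/
def InE1 (S : Set (Fin l → ℝ)) (u : (Fin l → ℝ) → ℝ) : Prop :=
  ConvexOn ℝ Set.univ u ∧ (∃ C : ℝ, ∀ y, u y ≤ suppFn S y + C) ∧
    MeasureTheory.IntegrableOn (legendre u) S MeasureTheory.volume

/-- The reduced J-functional
`J_ρ(u) = inf_ℓ { (1/|S|_ρ) ∫_S (u* − ℓ) ρ dz − inf_S (u* − ℓ) }`,
the infimum over all affine functions `ℓ(z) = ⟨a,z⟩ + b`. -/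
def Jred (S : Set (Fin l → ℝ)) (ρ u : (Fin l → ℝ) → ℝ) : ℝ :=
  ⨅ ab : (Fin l → ℝ) × ℝ,
    ((∫ z in S, ρ z)⁻¹ * (∫ z in S, (legendre u z - (dotp ab.1 z + ab.2)) * ρ z)
      - sInf ((fun z => legendre u z - (dotp ab.1 z + ab.2)) '' S))

/-- The Ding functional
`D_g(u) = (1/|S|_g) ∫_S u* g dz − log ∫_{ℝ^l} e^{−u} dy`. -/
def Ding (S : Set (Fin l → ℝ)) (g u : (Fin l → ℝ) → ℝ) : ℝ :=
  (∫ z in S, g z)⁻¹ * (∫ z in S, legendre u z * g z)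
    - Real.log (∫ y : Fin l → ℝ, Real.exp (-(u y)))

/-- The Ding invariant `𝔇_g(φ) = (1/|S|_g) ∫_S φ g dz − φ(0)` of a convex function `φ` on `S`. -/
def DingInv (S : Set (Fin l → ℝ)) (g φ : (Fin l → ℝ) → ℝ) : ℝ :=
  (∫ z in S, g z)⁻¹ * (∫ z in S, φ z * g z) - φ 0

/-- `φ` is, on `S`, a maximum of finitely many affine functions. -/
def IsPLConvexOn (S : Set (Fin l → ℝ)) (φ : (Fin l → ℝ) → ℝ) : Prop :=
  ∃ (F : Finset ((Fin l → ℝ) × ℝ)) (hF : F.Nonempty),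
    ∀ z ∈ S, φ z = F.sup' hF (fun p => dotp p.1 z + p.2)

/- ### Auxiliary lemmas -/

lemma dotp_smul_right (a : Fin l → ℝ) (t : ℝ) (z : Fin l → ℝ) :
    dotp a (t • z) = t * dotp a z := by
  simp only [dotp, Finset.mul_sum, Pi.smul_apply, smul_eq_mul]
  exact Finset.sum_congr rfl fun i _ => by ring

lemma continuous_dotp (a : Fin l → ℝ) : Continuous (fun z : Fin l → ℝ => dotp a z) := by
  unfold dotp
  exact continuous_finset_sum _ fun i _ => continuous_const.mul (continuous_apply i)

lemma seg_mem_interior {S : Set (Fin l → ℝ)} (hSconv : Convex ℝ S)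
    (h0 : (0 : Fin l → ℝ) ∈ interior S) {z : Fin l → ℝ} (hz : z ∈ S) :
    ∀ t ∈ Ioo (0:ℝ) 1, t • z ∈ interior S := by
  intro t ht
  have : t • z ∈ openSegment ℝ (0 : Fin l → ℝ) z :=
    ⟨1 - t, t, by linarith [ht.2], ht.1, by ring, by simp⟩
  exact hSconv.openSegment_interior_self_subset_interior h0 hz this

lemma tendsto_smul_self (z : Fin l → ℝ) :
    Tendsto (fun t : ℝ => t • z) (𝓝[<] (1:ℝ)) (𝓝 z) := by
  have h : Tendsto (fun t : ℝ => t • z) (𝓝 (1:ℝ)) (𝓝 ((1:ℝ) • z)) :=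
    (continuous_id.smul continuous_const).tendsto 1
  rw [one_smul] at h
  exact h.mono_left nhdsWithin_le_nhds

lemma eventually_seg_mem {S : Set (Fin l → ℝ)} (hSconv : Convex ℝ S)
    (h0 : (0 : Fin l → ℝ) ∈ interior S) {z : Fin l → ℝ} (hz : z ∈ S) :
    ∀ᶠ t in 𝓝[<] (1:ℝ), t • z ∈ interior S := by
  filter_upwards [Ioo_mem_nhdsLT_of_mem (show (1:ℝ) ∈ Ioc (0:ℝ) 1 by constructor <;> norm_num)]
    with t ht
  exact seg_mem_interior hSconv h0 hz t ht

lemma tendsto_comp_seg {S : Set (Fin l → ℝ)} (hSconv : Convex ℝ S)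
    (h0 : (0 : Fin l → ℝ) ∈ interior S) {z : Fin l → ℝ} (hz : z ∈ S)
    {ψ : (Fin l → ℝ) → ℝ} (hψ : ContinuousOn ψ S) :
    Tendsto (fun t : ℝ => ψ (t • z)) (𝓝[<] (1:ℝ)) (𝓝 (ψ z)) := by
  have hmem : ∀ᶠ t in 𝓝[<] (1:ℝ), (fun t : ℝ => t • z) t ∈ S :=
    (eventually_seg_mem hSconv h0 hz).mono fun t ht => interior_subset ht
  have h1 : Tendsto (fun t : ℝ => t • z) (𝓝[<] (1:ℝ)) (𝓝[S] z) :=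
    tendsto_nhdsWithin_iff.2 ⟨tendsto_smul_self z, hmem⟩
  exact (hψ z hz).tendsto.comp h1

/-- The weighted volume is positive. -/
lemma integral_weight_pos {S : Set (Fin l → ℝ)} (hScompact : IsCompact S)
    (h0 : (0 : Fin l → ℝ) ∈ interior S) {g : (Fin l → ℝ) → ℝ}
    (hgcont : ContinuousOn g S) (hgpos : ∀ z ∈ S, 0 < g z) :
    0 < ∫ z in S, g z := by
  obtain ⟨x0, hx0, hmin⟩ := hScompact.exists_isMinOn ⟨0, interior_subset h0⟩ hgcont
  have hvol : 0 < volume S :=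
    lt_of_lt_of_le (isOpen_interior.measure_pos volume ⟨0, h0⟩) (measure_mono interior_subset)
  have hfin := (hScompact.measure_lt_top (μ := volume)).ne
  have h1 : g x0 * (volume S).toReal ≤ ∫ z in S, g z :=
    setIntegral_ge_of_const_le_real hScompact.isClosed.measurableSet hfin
      (fun x hx => hmin hx) (hgcont.integrableOn_compact hScompact)
  have h2 : 0 < g x0 * (volume S).toReal :=
    mul_pos (hgpos x0 hx0) (ENNReal.toReal_pos hvol.ne' hfin)
  linarith

/-- A nonnegative continuous function on a convex body with zero integral vanishes. -/
lemma eqzero_of_integral_eq_zero {S : Set (Fin l → ℝ)} (hScompact : IsCompact S)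
    (hSconv : Convex ℝ S) (h0 : (0 : Fin l → ℝ) ∈ interior S)
    {h : (Fin l → ℝ) → ℝ} (hcont : ContinuousOn h S) (hnn : ∀ z ∈ S, 0 ≤ h z)
    (hint : ∫ z in S, h z = 0) : ∀ z ∈ S, h z = 0 := by
  by_contra hne
  push_neg at hne
  obtain ⟨z0, hz0, hz0ne⟩ := hne
  have hz0pos : 0 < h z0 := lt_of_le_of_ne (hnn z0 hz0) (Ne.symm hz0ne)
  -- find an interior point where h is large
  have hev : ∀ᶠ t in 𝓝[<] (1:ℝ), h (t • z0) > h z0 / 2 :=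
    (tendsto_comp_seg hSconv h0 hz0 hcont).eventually (eventually_gt_nhds (by linarith))
  obtain ⟨t, htval, htmem⟩ := (hev.and (eventually_seg_mem hSconv h0 hz0)).exists
  set w := t • z0 with hw
  set c := h z0 / 2 with hc
  have hcpos : 0 < c := by positivity
  -- a small ball around w where h > c
  have hSnhds : S ∈ 𝓝 w := mem_interior_iff_mem_nhds.1 (interior_mono Set.Subset.rfl htmem)
  have hCA : ContinuousAt h w := hcont.continuousAt hSnhds
  have hU : interior S ∩ h ⁻¹' (Ioi c) ∈ 𝓝 w :=
    Filter.inter_mem (isOpen_interior.mem_nhds htmem) (hCA (isOpen_Ioi.mem_nhds htval))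
  obtain ⟨r, hr, hball⟩ := Metric.mem_nhds_iff.1 hU
  have hballS : Metric.ball w r ⊆ S := fun x hx => interior_subset (hball hx).1
  have hIh : IntegrableOn h S volume := hcont.integrableOn_compact hScompact
  have h1 : c * (volume (Metric.ball w r)).toReal ≤ ∫ z in Metric.ball w r, h z :=
    setIntegral_ge_of_const_le_real measurableSet_ball measure_ball_lt_top.ne
      (fun x hx => ((hball hx).2 : c < h x).le) (hIh.mono_set hballS)
  have h2 : ∫ z in Metric.ball w r, h z ≤ ∫ z in S, h z := by
    refine setIntegral_mono_set hIh ?_ (HasSubset.Subset.eventuallyLE hballS)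
    exact (ae_restrict_iff' hScompact.isClosed.measurableSet).2 (ae_of_all _ hnn)
  have h3 : 0 < c * (volume (Metric.ball w r)).toReal :=
    mul_pos hcpos (ENNReal.toReal_pos (Metric.measure_ball_pos volume w hr).ne' measure_ball_lt_top.ne)
  rw [hint] at h2
  linarith

/-- Existence of a supporting affine function at `0`. -/
lemma exists_subgradient {S : Set (Fin l → ℝ)} (hSconv : Convex ℝ S)
    (h0 : (0 : Fin l → ℝ) ∈ interior S) {φ : (Fin l → ℝ) → ℝ}
    (hφcont : ContinuousOn φ S) (hφconv : ConvexOn ℝ S φ) :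
    ∃ a : Fin l → ℝ, ∀ z ∈ S, φ 0 + dotp a z ≤ φ z := by
  classical
  set E : Set ((Fin l → ℝ) × ℝ) := {p | p.1 ∈ interior S ∧ φ p.1 < p.2} with hE
  have hCAφ : ∀ x ∈ interior S, ContinuousAt φ x := fun x hx =>
    hφcont.continuousAt (mem_interior_iff_mem_nhds.1 hx)
  have hEopen : IsOpen E := by
    rw [isOpen_iff_mem_nhds]
    rintro ⟨x, t⟩ ⟨hx, hxt⟩
    have hm : (φ x + t) / 2 < t := by linarith
    have hU : interior S ∩ φ ⁻¹' (Iio ((φ x + t)/2)) ∈ 𝓝 x :=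
      Filter.inter_mem (isOpen_interior.mem_nhds hx)
        (hCAφ x hx (isOpen_Iio.mem_nhds (by simpa using by linarith : φ x < (φ x + t)/2)))
    have : (interior S ∩ φ ⁻¹' (Iio ((φ x + t)/2))) ×ˢ Ioi ((φ x + t)/2) ∈ 𝓝 (x, t) :=
      prod_mem_nhds hU (isOpen_Ioi.mem_nhds hm)
    refine Filter.mem_of_superset this ?_
    rintro ⟨y, s⟩ ⟨⟨hy1, hy2⟩, hs⟩
    exact ⟨hy1, lt_trans hy2 hs⟩
  have hEconv : Convex ℝ E := by
    rintro ⟨x, t⟩ ⟨hx, hxt⟩ ⟨y, s⟩ ⟨hy, hys⟩ a b ha hb hab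
    refine ⟨hSconv.interior hx hy ha hb hab, ?_⟩
    have hmem : φ (a • x + b • y) ≤ a • φ x + b • φ y :=
      hφconv.2 (interior_subset hx) (interior_subset hy) ha hb hab
    simp only [smul_eq_mul] at hmem
    have hlt : a * φ x + b * φ y < a * t + b * s := by
      rcases ha.lt_or_eq with hapos | haz
      · have h1 : a * φ x < a * t := (mul_lt_mul_iff_right₀ hapos).2 hxt
        have h2 : b * φ y ≤ b * s := mul_le_mul_of_nonneg_left hys.le hb
        linarith
      · have hb1 : b = 1 := by linarith
        simp only [← haz, zero_mul, zero_add, hb1, one_mul]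
        exact hys
    show φ ((a • (x, t) + b • (y, s) : (Fin l → ℝ) × ℝ).1) < (a • (x, t) + b • (y, s) : (Fin l → ℝ) × ℝ).2
    have h1 : (a • (x, t) + b • (y, s) : (Fin l → ℝ) × ℝ).1 = a • x + b • y := rfl
    have h2 : (a • (x, t) + b • (y, s) : (Fin l → ℝ) × ℝ).2 = a * t + b * s := rfl
    rw [h1, h2]
    exact lt_of_le_of_lt hmem hlt
  have hnot : ((0 : Fin l → ℝ), φ 0) ∉ E := fun hmem => lt_irrefl _ hmem.2
  obtain ⟨f, hf⟩ := geometric_hahn_banach_open_point hEconv hEopen hnot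
  set c : ℝ := f ((0 : Fin l → ℝ), (1:ℝ)) with hcdef
  have hsplit : ∀ (x : Fin l → ℝ) (t : ℝ), f (x, t) = f (x, 0) + t * c := by
    intro x t
    have : (x, t) = (x, (0:ℝ)) + t • ((0 : Fin l → ℝ), (1:ℝ)) := by
      simp [Prod.ext_iff]
    rw [this, f.map_add, f.map_smul, smul_eq_mul]
  have hzz : ((0 : Fin l → ℝ), (0:ℝ)) = (0 : (Fin l → ℝ) × ℝ) := rfl
  have hf0 : f ((0 : Fin l → ℝ), φ 0) = φ 0 * c := by
    rw [hsplit 0 (φ 0), hzz, map_zero, zero_add]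
  have hcneg : c < 0 := by
    have h1 : f ((0 : Fin l → ℝ), φ 0 + 1) < f ((0 : Fin l → ℝ), φ 0) :=
      hf _ ⟨h0, by show φ 0 < φ 0 + 1; linarith⟩
    rw [hsplit 0 (φ 0 + 1), hsplit 0 (φ 0)] at h1
    linarith
  have hkey : ∀ x ∈ interior S, f (x, 0) + c * φ x ≤ c * φ 0 := by
    intro x hx
    by_contra hlt
    push_neg at hlt
    set A := f (x, 0) + c * φ x with hA
    set ε := (A - c * φ 0) / (-c) with hε
    have hεpos : 0 < ε := div_pos (by linarith) (by linarith)
    have hmemE : (x, φ x + ε) ∈ E := ⟨hx, by show φ x < φ x + ε; linarith⟩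
    have := hf _ hmemE
    rw [hsplit x (φ x + ε), hf0] at this
    have hεc : ε * c = -(A - c * φ 0) := by
      rw [hε, div_mul_eq_mul_div, div_eq_iff (neg_ne_zero.mpr (ne_of_lt hcneg))]
      ring
    nlinarith [this, hεc]
  set a : Fin l → ℝ := fun i => -(f (Pi.single i 1, 0)) / c with ha
  have hLsum : ∀ x : Fin l → ℝ, f (x, 0) = ∑ i, x i * f (Pi.single i 1, 0) := by
    intro x
    have hsingle : ∀ i : Fin l, x i • (Pi.single i (1:ℝ) : Fin l → ℝ) = Pi.single i (x i) := by
      intro i; ext j; by_cases hij : i = j <;> simp [Pi.single_apply, hij]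
    have hx : (x, (0:ℝ)) = ∑ i, x i • ((Pi.single i 1 : Fin l → ℝ), (0:ℝ)) := by
      rw [Prod.ext_iff]
      refine ⟨?_, ?_⟩
      · rw [Prod.fst_sum]
        simp only [Prod.smul_fst, hsingle]
        exact (Finset.univ_sum_single x).symm
      · rw [Prod.snd_sum]
        simp
    rw [hx, map_sum]
    exact Finset.sum_congr rfl fun i _ => by rw [f.map_smul, smul_eq_mul]
  have hdotp : ∀ x : Fin l → ℝ, dotp a x = -(f (x, 0)) / c := by
    intro x
    rw [hLsum x, dotp]
    have hterm : ∀ i : Fin l, a i * x i = -(x i * f (Pi.single i 1, 0)) / c := by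
      intro i; simp only [ha]; ring
    rw [Finset.sum_congr rfl fun i _ => hterm i, ← Finset.sum_div, ← Finset.sum_neg_distrib]
  have hinterior : ∀ x ∈ interior S, φ 0 + dotp a x ≤ φ x := by
    intro x hx
    have hk := hkey x hx
    rw [hdotp x]
    set F := f (x, 0) with hF
    have hfc : -F / c * c = -F := div_mul_cancel₀ _ (ne_of_lt hcneg)
    nlinarith [hk, hfc, hcneg]
  refine ⟨a, fun z hz => ?_⟩
  have hT1 : Tendsto (fun t : ℝ => φ 0 + dotp a (t • z)) (𝓝[<] (1:ℝ)) (𝓝 (φ 0 + dotp a z)) := by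
    have : Tendsto (fun t : ℝ => φ 0 + t * dotp a z) (𝓝[<] (1:ℝ)) (𝓝 (φ 0 + 1 * dotp a z)) :=
      (tendsto_const_nhds.add ((continuous_id.mul continuous_const).tendsto 1)).mono_left
        nhdsWithin_le_nhds
    rw [one_mul] at this
    simpa only [dotp_smul_right] using this
  have hT2 : Tendsto (fun t : ℝ => φ (t • z)) (𝓝[<] (1:ℝ)) (𝓝 (φ z)) :=
    tendsto_comp_seg hSconv h0 hz hφcont
  have hle : ∀ᶠ t in 𝓝[<] (1:ℝ), φ 0 + dotp a (t • z) ≤ φ (t • z) := by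
    filter_upwards [eventually_seg_mem hSconv h0 hz] with t ht
    exact hinterior _ ht
  exact le_of_tendsto_of_tendsto hT1 hT2 hle

lemma integrableOn_coord_mul {S : Set (Fin l → ℝ)} (hScompact : IsCompact S)
    {g : (Fin l → ℝ) → ℝ} (hgcont : ContinuousOn g S) (i : Fin l) :
    IntegrableOn (fun z => z i * g z) S volume :=
  ((continuous_apply i).continuousOn.mul hgcont).integrableOn_compact hScompact

lemma integral_affine_mul {S : Set (Fin l → ℝ)} (hScompact : IsCompact S)
    {g : (Fin l → ℝ) → ℝ} (hgcont : ContinuousOn g S) (a : Fin l → ℝ) (b : ℝ) :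
    ∫ z in S, (dotp a z + b) * g z
      = (∑ i, a i * ∫ z in S, z i * g z) + b * ∫ z in S, g z := by
  have hgI : IntegrableOn g S volume := hgcont.integrableOn_compact hScompact
  have hterm : ∀ i : Fin l, IntegrableOn (fun z => a i * (z i * g z)) S volume :=
    fun i => (integrableOn_coord_mul hScompact hgcont i).const_mul _
  have heq : ∀ z : Fin l → ℝ, (dotp a z + b) * g z
      = (∑ i, a i * (z i * g z)) + b * g z := by
    intro z
    rw [dotp, add_mul, Finset.sum_mul]
    congr 1
    exact Finset.sum_congr rfl fun i _ => by ring
  calc ∫ z in S, (dotp a z + b) * g z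
      = ∫ z in S, ((∑ i, a i * (z i * g z)) + b * g z) := by
        exact integral_congr_ae (ae_of_all _ fun z => heq z)
    _ = (∫ z in S, ∑ i, a i * (z i * g z)) + ∫ z in S, b * g z :=
        integral_add (integrable_finset_sum _ fun i _ => hterm i) (hgI.const_mul b)
    _ = (∑ i, ∫ z in S, a i * (z i * g z)) + b * ∫ z in S, g z := by
        rw [integral_finset_sum _ fun i _ => hterm i, integral_const_mul]
    _ = (∑ i, a i * ∫ z in S, z i * g z) + b * ∫ z in S, g z := by
        congr 1
        exact Finset.sum_congr rfl fun i _ => integral_const_mul _ _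


/-- Theorem B, combinatorial form.
For a compact convex polytope `S = P* ⊂ ℝ^l` (`l ≥ 1`) with `0` in its interior and a
continuous strictly positive weight `g` on `S`, the following are equivalent:
(i) for every continuous convex function `φ` on `S`, `𝔇_g(φ) ≥ 0`, with equality iff `φ`
is the restriction of an affine function; (ii) `∫_S z_k g(z) dz = 0` for all `k`. -/
theorem statement0 (l : ℕ) (hl : 1 ≤ l) (S : Set (Fin l → ℝ))
    (hScompact : IsCompact S) (hSconv : Convex ℝ S)
    (hSpoly : ∃ F : Finset (Fin l → ℝ), S = convexHull ℝ (F : Set (Fin l → ℝ)))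
    (h0 : (0 : Fin l → ℝ) ∈ interior S)
    (g : (Fin l → ℝ) → ℝ) (hgcont : ContinuousOn g S) (hgpos : ∀ z ∈ S, 0 < g z) :
    (∀ φ : (Fin l → ℝ) → ℝ, ContinuousOn φ S → ConvexOn ℝ S φ →
        0 ≤ DingInv S g φ ∧
          (DingInv S g φ = 0 ↔
            ∃ (a : Fin l → ℝ) (b : ℝ), ∀ z ∈ S, φ z = dotp a z + b)) ↔
    (∀ k : Fin l, ∫ z in S, z k * g z = 0) := by
  have hI : 0 < ∫ z in S, g z := integral_weight_pos hScompact h0 hgcont hgpos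
  have hIne : (∫ z in S, g z) ≠ 0 := ne_of_gt hI
  have hmS : MeasurableSet S := hScompact.isClosed.measurableSet
  constructor
  · -- (i) → (ii)
    intro hi k
    have hcont : ContinuousOn (fun z : Fin l → ℝ => z k) S := (continuous_apply k).continuousOn
    have hconv : ConvexOn ℝ S (fun z : Fin l → ℝ => z k) := by
      refine ⟨hSconv, fun x hx y hy a b ha hb hab => ?_⟩
      simp [smul_eq_mul]
    have haff : ∃ (a : Fin l → ℝ) (b : ℝ), ∀ z ∈ S, z k = dotp a z + b := by
      refine ⟨Pi.single k 1, 0, fun z _ => ?_⟩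
      simp [dotp, Pi.single_apply, Finset.sum_ite_eq]
    have h := (hi _ hcont hconv).2.mpr haff
    rw [DingInv] at h
    simp only [Pi.zero_apply, sub_zero] at h
    exact (mul_eq_zero.1 h).resolve_left (inv_ne_zero hIne)
  · -- (ii) → (i)
    intro hbary φ hφcont hφconv
    obtain ⟨a, ha⟩ := exists_subgradient hSconv h0 hφcont hφconv
    set ψ : (Fin l → ℝ) → ℝ := fun z => (φ z - (φ 0 + dotp a z)) * g z with hψ
    have hψcont : ContinuousOn ψ S :=
      ((hφcont.sub ((continuous_const.add (continuous_dotp a)).continuousOn)).mul hgcont)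
    have hψnn : ∀ z ∈ S, 0 ≤ ψ z := fun z hz =>
      mul_nonneg (sub_nonneg.2 (ha z hz)) (hgpos z hz).le
    have hφgI : IntegrableOn (fun z => φ z * g z) S volume :=
      (hφcont.mul hgcont).integrableOn_compact hScompact
    have hlgI : IntegrableOn (fun z => (dotp a z + φ 0) * g z) S volume :=
      (((continuous_dotp a).continuousOn.add continuousOn_const).mul hgcont).integrableOn_compact
        hScompact
    have hkey : ∫ z in S, ψ z = (∫ z in S, φ z * g z) - φ 0 * ∫ z in S, g z := by
      have h1 : ∀ z : Fin l → ℝ, ψ z = φ z * g z - (dotp a z + φ 0) * g z := by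
        intro z; rw [hψ]; ring
      rw [integral_congr_ae (ae_of_all _ h1), integral_sub hφgI hlgI,
        integral_affine_mul hScompact hgcont a (φ 0)]
      have h2 : ∑ i, a i * ∫ z in S, z i * g z = 0 := by
        refine Finset.sum_eq_zero fun i _ => ?_
        rw [hbary i, mul_zero]
      rw [h2, zero_add]
    have hDing : DingInv S g φ = (∫ z in S, g z)⁻¹ * ∫ z in S, ψ z := by
      rw [DingInv, hkey, mul_sub]
      congr 1
      rw [mul_comm (φ 0), ← mul_assoc, inv_mul_cancel₀ hIne, one_mul]
    have hψint_nn : 0 ≤ ∫ z in S, ψ z := setIntegral_nonneg hmS hψnn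
    constructor
    · rw [hDing]
      exact mul_nonneg (inv_nonneg.2 hI.le) hψint_nn
    · constructor
      · -- equality → affine
        intro hzero
        rw [hDing] at hzero
        have hint0 : ∫ z in S, ψ z = 0 :=
          (mul_eq_zero.1 hzero).resolve_left (inv_ne_zero hIne)
        have hψ0 := eqzero_of_integral_eq_zero hScompact hSconv h0 hψcont hψnn hint0
        refine ⟨a, φ 0, fun z hz => ?_⟩
        have := hψ0 z hz
        rw [hψ, mul_eq_zero] at this
        rcases this with h | h
        · have : φ z = φ 0 + dotp a z := by linarith [sub_eq_zero.1 h]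
          rw [this]; ring
        · exact absurd h (ne_of_gt (hgpos z hz))
      · -- affine → equality
        rintro ⟨a', b', haff⟩
        have hcong : ∫ z in S, φ z * g z = ∫ z in S, (dotp a' z + b') * g z := by
          refine setIntegral_congr_fun hmS fun z hz => ?_
          rw [haff z hz]
        rw [DingInv, hcong, integral_affine_mul hScompact hgcont a' b']
        have h2 : ∑ i, a' i * ∫ z in S, z i * g z = 0 :=
          Finset.sum_eq_zero fun i _ => by rw [hbary i, mul_zero]
        have h3 : φ 0 = b' := by
          rw [haff 0 (interior_subset h0)]
          simp [dotp]
        rw [h2, zero_add, h3, mul_comm b', ← mul_assoc, inv_mul_cancel₀ hIne, one_mul, sub_self]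


end
end

section
/- Let P* ⊂ ℝ^l be a compact convex polytope with 0 in its interior which is the convex hull of its lattice points, P* = conv(P* ∩ ℤ^l), and let g : P* → ℝ be continuous and strictly positive. Set u_P(y) := log Σ_{a ∈ P* ∩ ℤ^l} e^{⟨a,y⟩} for y ∈ ℝ^l. Let φ : P* → ℝ be a piecewise linear convex function (a maximum of finitely many affine functions), let R ∈ ℝ, and for t ≥ 0 define the geodesic ray u_t(y) := sup_{z ∈ P*} ( ⟨y,z⟩ − u_P*(z) − t(φ(z) − R) ), where u_P*(z) := sup_{y ∈ ℝ^l}(⟨y,z⟩ − u_P(y)). Then lim_{t → ∞} D_g(u_t)/t = (1/|P*|_g) ∫_{P*} φ(z) g(z) dz − φ(0). -/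
open MeasureTheory Real Set Filter

noncomputable section

variable {l : ℕ}

/-- `u_P(y) = log ∑_{a ∈ A} e^{⟨a,y⟩}`, summing over the lattice points `A` of `P*`. -/
def uPfun (A : Finset (Fin l → ℝ)) (y : Fin l → ℝ) : ℝ :=
  Real.log (∑ a ∈ A, Real.exp (dotp a y))

/-- The toric geodesic ray
`u_t(y) = sup_{z ∈ S} ( ⟨y,z⟩ − u_P*(z) − t(φ(z) − R) )`. -/
def geodesicRay (S : Set (Fin l → ℝ)) (A : Finset (Fin l → ℝ))
    (φ : (Fin l → ℝ) → ℝ) (R t : ℝ) (y : Fin l → ℝ) : ℝ :=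
  ⨆ z : S, (dotp y (z : Fin l → ℝ) - legendre (uPfun A) (z : Fin l → ℝ)
    - t * (φ (z : Fin l → ℝ) - R))

set_option linter.unusedSectionVars false
set_option maxHeartbeats 1000000
open scoped ENNReal NNReal

lemma aux_int_exp_abs {c : ℝ} (hc : 0 < c) : Integrable (fun x : ℝ => exp (-(c * |x|))) := by
  have h1 : IntegrableOn (fun x : ℝ => exp (-(c * |x|))) (Ioi 0) := by
    apply (exp_neg_integrableOn_Ioi 0 hc).congr_fun ?_ measurableSet_Ioi
    intro x hx
    show exp (-c * x) = exp (-(c * |x|))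
    rw [abs_of_pos hx]; ring_nf
  have h2 : IntegrableOn (fun x : ℝ => exp (-(c * |x|))) (Iic 0) := by
    rw [← Measure.map_neg_eq_self (volume : Measure ℝ)]
    have m : MeasurableEmbedding fun x : ℝ => -x := (Homeomorph.neg ℝ).measurableEmbedding
    rw [m.integrableOn_map_iff]
    simp_rw [Function.comp_def, abs_neg, neg_preimage, neg_Iic, neg_zero]
    exact (integrableOn_Ici_iff_integrableOn_Ioi).mpr h1
  have := h2.union h1
  rwa [Iic_union_Ioi, integrableOn_univ] at this

lemma aux_int_exp_abs_val {c : ℝ} (hc : 0 < c) : (∫ x : ℝ, exp (-(c * |x|))) = 2 / c := by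
  have h : (fun x : ℝ => exp (-(c * |x|))) = fun x => (fun y => exp (-(c * y))) |x| := by
    funext x; rfl
  rw [h, integral_comp_abs (f := fun y => exp (-(c * y)))]
  rw [show (∫ x in Ioi (0:ℝ), exp (-(c*x))) = c⁻¹ • ∫ x in Ioi (c*0), exp (-x) from
    integral_comp_mul_left_Ioi (fun y => exp (-y)) 0 hc, mul_zero, integral_exp_neg_Ioi_zero,
    smul_eq_mul, mul_one]
  rw [div_eq_mul_inv]


lemma dotp_linear (y : Fin l → ℝ) : IsLinearMap ℝ (fun z => dotp y z) := by
  constructor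
  · intro z w
    simp [dotp, mul_add, Finset.sum_add_distrib]
  · intro c z
    simp only [dotp, Finset.mul_sum, Pi.smul_apply, smul_eq_mul]
    exact Finset.sum_congr rfl fun i _ => by ring

lemma dotp_comm (y z : Fin l → ℝ) : dotp y z = dotp z y := by
  simp [dotp, mul_comm]

lemma abs_dotp_le {z : Fin l → ℝ} {D : ℝ} (hz : ∀ i, |z i| ≤ D) (y : Fin l → ℝ) :
    |dotp y z| ≤ (∑ i, |y i|) * D := by
  calc |dotp y z| ≤ ∑ i, |y i * z i| := Finset.abs_sum_le_sum_abs _ _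
    _ ≤ ∑ i, |y i| * D := by
        refine Finset.sum_le_sum fun i _ => ?_
        rw [abs_mul]
        exact mul_le_mul_of_nonneg_left (hz i) (abs_nonneg _)
    _ = (∑ i, |y i|) * D := by rw [← Finset.sum_mul]

lemma dotp_le_of_mem_hull {A : Finset (Fin l → ℝ)} (hA : A.Nonempty) {z : Fin l → ℝ}
    (hz : z ∈ convexHull ℝ (A : Set (Fin l → ℝ))) (y : Fin l → ℝ) :
    dotp y z ≤ A.sup' hA (fun a => dotp y a) := by
  set M := A.sup' hA (fun a => dotp y a) with hM
  have h : convexHull ℝ (A : Set (Fin l → ℝ)) ⊆ {w | dotp y w ≤ M} := by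
    apply convexHull_min
    · intro a ha
      show dotp y a ≤ M
      exact Finset.le_sup' (fun a => dotp y a) ha
    · exact convex_halfSpace_le (dotp_linear y) M
  exact h hz

lemma sup'_le_uPfun {A : Finset (Fin l → ℝ)} (hA : A.Nonempty) (y : Fin l → ℝ) :
    A.sup' hA (fun a => dotp a y) ≤ uPfun A y := by
  refine Finset.sup'_le hA _ (fun a ha => ?_)
  have h1 : exp (dotp a y) ≤ ∑ b ∈ A, exp (dotp b y) :=
    Finset.single_le_sum (fun b _ => (exp_pos (dotp b y)).le) ha
  have h2 : log (exp (dotp a y)) ≤ log (∑ b ∈ A, exp (dotp b y)) :=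
    Real.log_le_log (exp_pos _) h1
  rw [log_exp] at h2
  exact h2

lemma dotp_le_uPfun {S : Set (Fin l → ℝ)} {A : Finset (Fin l → ℝ)}
    (hShull : S = convexHull ℝ (A : Set (Fin l → ℝ))) (hA : A.Nonempty)
    {z : Fin l → ℝ} (hz : z ∈ S) (y : Fin l → ℝ) :
    dotp y z ≤ uPfun A y := by
  refine (dotp_le_of_mem_hull hA (hShull ▸ hz) y).trans ?_
  rw [Finset.sup'_congr hA rfl (fun a _ => dotp_comm y a)]
  exact sup'_le_uPfun hA y

lemma uPfun_zero {A : Finset (Fin l → ℝ)} : uPfun A 0 = Real.log A.card := by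
  simp [uPfun, dotp]

section ctx
variable {S : Set (Fin l → ℝ)} {A : Finset (Fin l → ℝ)}
  (hShull : S = convexHull ℝ (A : Set (Fin l → ℝ))) (hA : A.Nonempty)

include hShull hA

lemma bddAbove_legset {z : Fin l → ℝ} (hz : z ∈ S) :
    BddAbove (Set.range fun y => dotp y z - uPfun A y) := by
  refine ⟨0, ?_⟩
  rintro _ ⟨y, rfl⟩
  have := dotp_le_uPfun hShull hA hz y
  simp only []
  linarith

lemma legU_le_zero {z : Fin l → ℝ} (hz : z ∈ S) : legendre (uPfun A) z ≤ 0 :=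
  ciSup_le fun y => by have := dotp_le_uPfun hShull hA hz y; linarith

lemma legU_ge {z : Fin l → ℝ} (hz : z ∈ S) (y : Fin l → ℝ) :
    dotp y z - uPfun A y ≤ legendre (uPfun A) z :=
  le_ciSup (bddAbove_legset hShull hA hz) y

lemma legU_lb {z : Fin l → ℝ} (hz : z ∈ S) :
    -(Real.log A.card) ≤ legendre (uPfun A) z := by
  have h := legU_ge hShull hA hz 0
  simp only [dotp, Pi.zero_apply, zero_mul, Finset.sum_const_zero, uPfun_zero, zero_sub] at h
  exact h

end ctx

section geod
variable {S : Set (Fin l → ℝ)} {A : Finset (Fin l → ℝ)}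
  {φ : (Fin l → ℝ) → ℝ} {R : ℝ} {D Cφ : ℝ}
  (hShull : S = convexHull ℝ (A : Set (Fin l → ℝ))) (hA : A.Nonempty)
  (hS0 : (0 : Fin l → ℝ) ∈ S)
  (hD : ∀ z ∈ S, ∀ i, |z i| ≤ D) (hD0 : 0 ≤ D)
  (hCφ : ∀ z ∈ S, |φ z| ≤ Cφ)

include hShull hA hS0 hD hD0 hCφ

lemma bddAbove_geodset (y : Fin l → ℝ) (t : ℝ) :
    BddAbove (Set.range fun z : S =>
      dotp y (z : Fin l → ℝ) - legendre (uPfun A) (z : Fin l → ℝ)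
        - t * (φ (z : Fin l → ℝ) - R)) := by
  refine ⟨(∑ i, |y i|) * D + Real.log A.card + |t| * (Cφ + |R|), ?_⟩
  rintro _ ⟨⟨z, hz⟩, rfl⟩
  simp only []
  have h1 : dotp y z ≤ (∑ i, |y i|) * D := (le_abs_self _).trans (abs_dotp_le (hD z hz) y)
  have h2 : -(Real.log A.card) ≤ legendre (uPfun A) z := legU_lb hShull hA hz
  have h3 : -(t * (φ z - R)) ≤ |t| * (Cφ + |R|) := by
    calc -(t * (φ z - R)) ≤ |t * (φ z - R)| := neg_le_abs _
      _ = |t| * |φ z - R| := abs_mul _ _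
      _ ≤ |t| * (Cφ + |R|) := by
          refine mul_le_mul_of_nonneg_left ?_ (abs_nonneg t)
          calc |φ z - R| ≤ |φ z| + |R| := abs_sub _ _
            _ ≤ Cφ + |R| := by linarith [hCφ z hz]
  linarith

lemma geod_le (y : Fin l → ℝ) (t : ℝ) {c : ℝ}
    (hc : ∀ z ∈ S, dotp y z - legendre (uPfun A) z - t * (φ z - R) ≤ c) :
    geodesicRay S A φ R t y ≤ c := by
  haveI : Nonempty S := ⟨⟨0, hS0⟩⟩
  exact ciSup_le fun z => hc z z.2

lemma geod_ge (y : Fin l → ℝ) (t : ℝ) {z : Fin l → ℝ} (hz : z ∈ S) :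
    dotp y z - legendre (uPfun A) z - t * (φ z - R) ≤ geodesicRay S A φ R t y :=
  le_ciSup (bddAbove_geodset hShull hA hS0 hD hD0 hCφ y t) (⟨z, hz⟩ : S)

end geod

lemma dotp_add_smul (y a w : Fin l → ℝ) (t : ℝ) :
    dotp (y + t • a) w = dotp y w + t * dotp a w := by
  simp only [dotp, Pi.add_apply, Pi.smul_apply, smul_eq_mul, Finset.mul_sum,
    ← Finset.sum_add_distrib]
  exact Finset.sum_congr rfl fun i _ => by ring

section geod2
variable {S : Set (Fin l → ℝ)} {A : Finset (Fin l → ℝ)}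
  {φ : (Fin l → ℝ) → ℝ} {R : ℝ} {D Cφ : ℝ} {F : Finset ((Fin l → ℝ) × ℝ)} {hF : F.Nonempty}
  (hShull : S = convexHull ℝ (A : Set (Fin l → ℝ))) (hA : A.Nonempty)
  (hS0 : (0 : Fin l → ℝ) ∈ S)
  (hD : ∀ z ∈ S, ∀ i, |z i| ≤ D) (hD0 : 0 ≤ D)
  (hCφ : ∀ z ∈ S, |φ z| ≤ Cφ)
  (hφF : ∀ z ∈ S, φ z = F.sup' hF (fun p => dotp p.1 z + p.2))

include hShull hA hS0 hD hD0 hCφ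

lemma bddAbove_legset_geod {z : Fin l → ℝ} (hz : z ∈ S) (t : ℝ) :
    BddAbove (Set.range fun y => dotp y z - geodesicRay S A φ R t y) := by
  refine ⟨legendre (uPfun A) z + t * (φ z - R), ?_⟩
  rintro _ ⟨y, rfl⟩
  have := geod_ge (R := R) hShull hA hS0 hD hD0 hCφ y t hz
  simp only []
  linarith

lemma legendre_geod_le {z : Fin l → ℝ} (hz : z ∈ S) (t : ℝ) :
    legendre (geodesicRay S A φ R t) z ≤ legendre (uPfun A) z + t * (φ z - R) := by
  refine ciSup_le fun y => ?_
  have := geod_ge (R := R) hShull hA hS0 hD hD0 hCφ y t hz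
  linarith

include hφF

lemma legendre_geod_ge {z : Fin l → ℝ} (hz : z ∈ S) {t : ℝ} (ht : 0 ≤ t) :
    legendre (uPfun A) z + t * (φ z - R) ≤ legendre (geodesicRay S A φ R t) z := by
  obtain ⟨p, hpF, hpz⟩ := Finset.exists_mem_eq_sup' hF (fun p => dotp p.1 z + p.2)
  have hattain : φ z = dotp p.1 z + p.2 := by rw [hφF z hz, hpz]
  have hsub : ∀ w ∈ S, dotp p.1 w + p.2 ≤ φ w := by
    intro w hw
    rw [hφF w hw]
    exact Finset.le_sup' (fun p => dotp p.1 w + p.2) hpF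
  have key : ∀ y₁ : Fin l → ℝ,
      dotp y₁ z - uPfun A y₁ ≤ legendre (geodesicRay S A φ R t) z - t * (φ z - R) := by
    intro y₁
    have hu : geodesicRay S A φ R t (y₁ + t • p.1)
        ≤ uPfun A y₁ + t * (dotp p.1 z - (φ z - R)) := by
      refine geod_le hShull hA hS0 hD hD0 hCφ _ t (fun w hw => ?_)
      rw [dotp_add_smul]
      have h1 : dotp y₁ w - legendre (uPfun A) w ≤ uPfun A y₁ := by
        have := legU_ge hShull hA hw y₁; linarith
      have h2 : t * (dotp p.1 w - (φ w - R)) ≤ t * (dotp p.1 z - (φ z - R)) := by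
        refine mul_le_mul_of_nonneg_left ?_ ht
        have := hsub w hw
        linarith [hattain]
      nlinarith [h2]
    have hle : dotp (y₁ + t • p.1) z - geodesicRay S A φ R t (y₁ + t • p.1)
        ≤ legendre (geodesicRay S A φ R t) z :=
      le_ciSup (bddAbove_legset_geod hShull hA hS0 hD hD0 hCφ hz t) _
    rw [dotp_add_smul] at hle
    have expand : dotp y₁ z + t * dotp p.1 z - (uPfun A y₁ + t * (dotp p.1 z - (φ z - R)))
        ≤ legendre (geodesicRay S A φ R t) z := by linarith
    linarith
  have : legendre (uPfun A) z ≤ legendre (geodesicRay S A φ R t) z - t * (φ z - R) :=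
    ciSup_le key
  linarith

lemma legendre_geod_eq {z : Fin l → ℝ} (hz : z ∈ S) {t : ℝ} (ht : 0 ≤ t) :
    legendre (geodesicRay S A φ R t) z = legendre (uPfun A) z + t * (φ z - R) :=
  le_antisymm (legendre_geod_le hShull hA hS0 hD hD0 hCφ hz t)
    (legendre_geod_ge hShull hA hS0 hD hD0 hCφ hφF hz ht)

end geod2

lemma dotp_sub_add (y y' z : Fin l → ℝ) : dotp y z = dotp y' z + dotp (y - y') z := by
  simp only [dotp, Pi.sub_apply, ← Finset.sum_add_distrib]
  exact Finset.sum_congr rfl fun i _ => by ring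

lemma sum_abs_sub_le (y y' : Fin l → ℝ) : ∑ i, |(y - y') i| ≤ l * dist y y' := by
  calc ∑ i, |(y - y') i| ≤ ∑ _i : Fin l, dist y y' := by
        refine Finset.sum_le_sum fun i _ => ?_
        rw [Pi.sub_apply, ← Real.dist_eq]
        exact dist_le_pi_dist y y' i
    _ = l * dist y y' := by simp [Finset.sum_const, nsmul_eq_mul]

section geod3
variable {S : Set (Fin l → ℝ)} {A : Finset (Fin l → ℝ)}
  {φ : (Fin l → ℝ) → ℝ} {R : ℝ} {D Cφ : ℝ}
  (hShull : S = convexHull ℝ (A : Set (Fin l → ℝ))) (hA : A.Nonempty)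
  (hS0 : (0 : Fin l → ℝ) ∈ S)
  (hD : ∀ z ∈ S, ∀ i, |z i| ≤ D) (hD0 : 0 ≤ D)
  (hCφ : ∀ z ∈ S, |φ z| ≤ Cφ)

include hShull hA hS0 hD hD0 hCφ

lemma geod_lip_oneside (t : ℝ) (y y' : Fin l → ℝ) :
    geodesicRay S A φ R t y ≤ geodesicRay S A φ R t y' + (l * D) * dist y y' := by
  refine geod_le hShull hA hS0 hD hD0 hCφ y t (fun z hz => ?_)
  have h1 : dotp y' z - legendre (uPfun A) z - t * (φ z - R) ≤ geodesicRay S A φ R t y' :=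
    geod_ge hShull hA hS0 hD hD0 hCφ y' t hz
  have h2 : dotp (y - y') z ≤ (l * D) * dist y y' := by
    calc dotp (y - y') z ≤ |dotp (y - y') z| := le_abs_self _
      _ ≤ (∑ i, |(y - y') i|) * D := abs_dotp_le (hD z hz) _
      _ ≤ (l * dist y y') * D :=
          mul_le_mul_of_nonneg_right (sum_abs_sub_le y y') hD0
      _ = (l * D) * dist y y' := by ring
  have h3 := dotp_sub_add y y' z
  linarith

lemma geod_continuous (t : ℝ) : Continuous (geodesicRay S A φ R t) := by
  have hK : (0:ℝ) ≤ l * D := by positivity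
  refine LipschitzWith.continuous (K := Real.toNNReal (l * D))
    (LipschitzWith.of_dist_le_mul fun y y' => ?_)
  rw [Real.dist_eq, Real.coe_toNNReal _ hK]
  rw [abs_le]
  constructor
  · have := geod_lip_oneside hShull hA hS0 hD hD0 hCφ (R := R) t y' y
    rw [dist_comm] at this
    linarith
  · have := geod_lip_oneside hShull hA hS0 hD hD0 hCφ (R := R) t y y'
    linarith

end geod3

lemma dotp_combo (y z1 z2 : Fin l → ℝ) (a b : ℝ) :
    dotp y (a • z1 + b • z2) = a * dotp y z1 + b * dotp y z2 := by
  simp only [dotp, Pi.add_apply, Pi.smul_apply, smul_eq_mul, Finset.mul_sum,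
    ← Finset.sum_add_distrib]
  exact Finset.sum_congr rfl fun i _ => by ring

section meas
variable {S : Set (Fin l → ℝ)} {A : Finset (Fin l → ℝ)}
  (hShull : S = convexHull ℝ (A : Set (Fin l → ℝ))) (hA : A.Nonempty)
  (hSconv : Convex ℝ S) (hScompact : IsCompact S)

include hShull hA hSconv

lemma legU_convexOn : ConvexOn ℝ S (legendre (uPfun A)) := by
  refine ⟨hSconv, fun z1 hz1 z2 hz2 a b ha hb hab => ?_⟩
  refine ciSup_le fun y => ?_
  have h1 := legU_ge hShull hA hz1 y
  have h2 := legU_ge hShull hA hz2 y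
  have h1' := mul_le_mul_of_nonneg_left h1 ha
  have h2' := mul_le_mul_of_nonneg_left h2 hb
  have hdot := dotp_combo y z1 z2 a b
  have hexp : dotp y (a • z1 + b • z2) - uPfun A y
      = a * (dotp y z1 - uPfun A y) + b * (dotp y z2 - uPfun A y) := by
    rw [hdot]; linear_combination (uPfun A y) * hab
  rw [hexp]
  exact add_le_add h1' h2'

lemma legU_contOn_interior : ContinuousOn (legendre (uPfun A)) (interior S) := by
  have h := (legU_convexOn hShull hA hSconv).subset interior_subset
    (hSconv.interior)
  exact h.continuousOn isOpen_interior

omit hShull hA hSconv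

lemma S_ae_interior (hSconv : Convex ℝ S) (hSclosed : IsClosed S) :
    S =ᵐ[(volume : Measure (Fin l → ℝ))] interior S := by
  rw [MeasureTheory.ae_eq_set]
  constructor
  · refine measure_mono_null ?_ (hSconv.addHaar_frontier volume)
    intro x hx
    exact ⟨subset_closure hx.1, hx.2⟩
  · have : interior S \ S = ∅ := by
      rw [diff_eq_empty]
      exact interior_subset
    simp [this]

lemma integrableOn_interior_of_bounded {f : (Fin l → ℝ) → ℝ}
    (hScompact : IsCompact S)
    (hf : ContinuousOn f (interior S)) {C : ℝ} (hC : ∀ z ∈ interior S, |f z| ≤ C) :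
    IntegrableOn f (interior S) := by
  have hfin : volume (interior S) < ⊤ :=
    lt_of_le_of_lt (measure_mono interior_subset) hScompact.measure_lt_top
  refine Integrable.mono' (g := fun _ => C)
    ((integrableOn_const_iff).2 (Or.inr hfin))
    (hf.aestronglyMeasurable isOpen_interior.measurableSet) ?_
  refine (ae_restrict_iff' isOpen_interior.measurableSet).2 ?_
  exact Filter.Eventually.of_forall fun z hz => by
    rw [Real.norm_eq_abs]; exact hC z hz
end meas

/-- Proposition 4.1. Along the toric geodesic ray associated to the
toric test configuration given by `(P, φ, R)`, the Ding functional has asymptotic slope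
`(1/|P*|_g) ∫_{P*} φ g dz − φ(0)`. -/
theorem statement1 (l : ℕ) (S : Set (Fin l → ℝ))
    (hScompact : IsCompact S) (hSconv : Convex ℝ S)
    (h0 : (0 : Fin l → ℝ) ∈ interior S)
    (A : Finset (Fin l → ℝ))
    (hA : (A : Set (Fin l → ℝ)) = S ∩ {z | ∀ i, ∃ m : ℤ, z i = (m : ℝ)})
    (hShull : S = convexHull ℝ (A : Set (Fin l → ℝ)))
    (g : (Fin l → ℝ) → ℝ) (hgcont : ContinuousOn g S) (hgpos : ∀ z ∈ S, 0 < g z)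
    (φ : (Fin l → ℝ) → ℝ) (hφ : IsPLConvexOn S φ) (R : ℝ) :
    Filter.Tendsto (fun t : ℝ => Ding S g (geodesicRay S A φ R t) / t)
      Filter.atTop
      (nhds ((∫ z in S, g z)⁻¹ * (∫ z in S, φ z * g z) - φ 0)) := by
  classical
  obtain ⟨F, hF, hφF⟩ := hφ
  have hS0 : (0 : Fin l → ℝ) ∈ S := interior_subset h0
  have hAne : A.Nonempty := by
    have h0A : (0 : Fin l → ℝ) ∈ (A : Set (Fin l → ℝ)) := by
      rw [hA]
      exact ⟨hS0, fun i => ⟨0, by simp⟩⟩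
    exact ⟨0, by exact_mod_cast h0A⟩
  -- bound D on S
  obtain ⟨r, hr⟩ := hScompact.isBounded.subset_closedBall 0
  set D : ℝ := max r 0 with hDdef
  have hD0 : 0 ≤ D := le_max_right _ _
  have hD : ∀ z ∈ S, ∀ i, |z i| ≤ D := by
    intro z hz i
    have h1 : ‖z‖ ≤ r := by
      have := hr hz
      rwa [Metric.mem_closedBall, dist_zero_right] at this
    calc |z i| = ‖z i‖ := rfl
      _ ≤ ‖z‖ := norm_le_pi_norm z i
      _ ≤ D := h1.trans (le_max_left _ _)
  -- bound on φ
  set Cφ : ℝ := F.sup' hF (fun p => (∑ i, |p.1 i|) * D + |p.2|) with hCφdef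
  have hCφ : ∀ z ∈ S, |φ z| ≤ Cφ := by
    intro z hz
    rw [abs_le]
    constructor
    · obtain ⟨p, hp⟩ := hF
      have h1 : dotp p.1 z + p.2 ≤ φ z := by
        rw [hφF z hz]; exact Finset.le_sup' (fun p => dotp p.1 z + p.2) hp
      have h2 : |dotp p.1 z| ≤ (∑ i, |p.1 i|) * D := abs_dotp_le (hD z hz) _
      have h3 : (∑ i, |p.1 i|) * D + |p.2| ≤ Cφ :=
        Finset.le_sup' (fun p => (∑ i, |p.1 i|) * D + |p.2|) hp
      have := neg_abs_le (dotp p.1 z)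
      have := neg_abs_le p.2
      have := le_abs_self p.2
      linarith
    · rw [hφF z hz]
      refine Finset.sup'_le hF _ (fun p hp => ?_)
      have h2 : |dotp p.1 z| ≤ (∑ i, |p.1 i|) * D := abs_dotp_le (hD z hz) _
      have h3 : (∑ i, |p.1 i|) * D + |p.2| ≤ Cφ :=
        Finset.le_sup' (fun p => (∑ i, |p.1 i|) * D + |p.2|) hp
      have := le_abs_self (dotp p.1 z)
      have := le_abs_self p.2
      linarith
  -- small cube inside S
  obtain ⟨δ, hδpos, hδ⟩ := Metric.isOpen_iff.mp isOpen_interior 0 h0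
  set ε : ℝ := δ / 2 with hεdef
  have hεpos : 0 < ε := by positivity
  have hεS : ∀ w : Fin l → ℝ, (∀ i, |w i| ≤ ε) → w ∈ S := by
    intro w hw
    refine interior_subset (hδ ?_)
    rw [Metric.mem_ball]
    rw [dist_pi_lt_iff hδpos]
    intro i
    calc dist (w i) ((0 : Fin l → ℝ) i) = |w i| := by simp [Real.dist_eq]
      _ ≤ ε := hw i
      _ < δ := by rw [hεdef]; linarith
  -- slope bound for φ near points
  set Mφ : ℝ := max (F.sup' hF (fun p => ∑ i, |p.1 i|)) 0 with hMφdef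
  have hMφ0 : 0 ≤ Mφ := le_max_right _ _
  have hφ0sup : ∀ p ∈ F, p.2 ≤ φ 0 := by
    intro p hp
    have : dotp p.1 0 + p.2 ≤ φ 0 := by
      rw [hφF 0 hS0]; exact Finset.le_sup' (fun p => dotp p.1 0 + p.2) hp
    simpa [dotp] using this
  have hφnear : ∀ ρ : ℝ, 0 ≤ ρ → ∀ z ∈ S, (∀ i, |z i| ≤ ρ) → φ z ≤ φ 0 + Mφ * ρ := by
    intro ρ hρ z hz hzρ
    rw [hφF z hz]
    refine Finset.sup'_le hF _ (fun p hp => ?_)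
    have h1 : |dotp p.1 z| ≤ (∑ i, |p.1 i|) * ρ := abs_dotp_le hzρ _
    have h2 : (∑ i, |p.1 i|) ≤ Mφ :=
      (Finset.le_sup' (fun p => ∑ i, |p.1 i|) hp).trans (le_max_left _ _)
    have h3 : dotp p.1 z ≤ Mφ * ρ := by
      calc dotp p.1 z ≤ |dotp p.1 z| := le_abs_self _
        _ ≤ (∑ i, |p.1 i|) * ρ := h1
        _ ≤ Mφ * ρ := mul_le_mul_of_nonneg_right h2 hρ
    have := hφ0sup p hp
    linarith
  -- subgradient of φ at 0
  obtain ⟨p₀, hp₀F, hp₀⟩ := Finset.exists_mem_eq_sup' hF (fun p => dotp p.1 (0:Fin l → ℝ) + p.2)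
  have hφ0eq : φ 0 = p₀.2 := by
    rw [hφF 0 hS0, hp₀]; simp [dotp]
  have hsub0 : ∀ w ∈ S, dotp p₀.1 w + p₀.2 ≤ φ w := by
    intro w hw
    rw [hφF w hw]
    exact Finset.le_sup' (fun p => dotp p.1 w + p.2) hp₀F
  set cA : ℝ := (A.card : ℝ) with hcAdef
  have hcA1 : 1 ≤ cA := by
    rw [hcAdef]
    exact_mod_cast Nat.one_le_iff_ne_zero.mpr (Finset.card_ne_zero_of_mem hAne.choose_spec)
  have hcApos : 0 < cA := lt_of_lt_of_le one_pos hcA1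
  set u : ℝ → (Fin l → ℝ) → ℝ := fun t => geodesicRay S A φ R t with hudef
  set I : ℝ → ℝ := fun t => ∫ y : Fin l → ℝ, Real.exp (-(u t y)) with hIdef
  -- lower bound on u for t ≥ 1
  have key_low : ∀ t : ℝ, 1 ≤ t → ∀ y : Fin l → ℝ,
      (ε/t) * (∑ i, |y i|) - t * (φ 0 - R) - Mφ * ε ≤ u t y := by
    intro t ht y
    have htpos : (0:ℝ) < t := lt_of_lt_of_le one_pos ht
    set zy : Fin l → ℝ := fun i => (ε/t) * (if 0 ≤ y i then 1 else -1) with hzydef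
    have hzyabs : ∀ i, |zy i| ≤ ε / t := by
      intro i
      rw [hzydef]
      simp only []
      rw [abs_mul, abs_of_pos (by positivity : (0:ℝ) < ε/t)]
      split <;> simp
    have hzyS : zy ∈ S := hεS zy (fun i => (hzyabs i).trans (by
      rw [div_le_iff₀ htpos]
      nlinarith))
    have hdot : dotp y zy = (ε/t) * ∑ i, |y i| := by
      rw [dotp, Finset.mul_sum]
      refine Finset.sum_congr rfl fun i _ => ?_
      rw [hzydef]
      simp only []
      split
      · rename_i h; rw [abs_of_nonneg h]; ring
      · rename_i h; rw [abs_of_neg (lt_of_not_ge h)]; ring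
    have hleg : legendre (uPfun A) zy ≤ 0 := legU_le_zero hShull hAne hzyS
    have hφzy : φ zy ≤ φ 0 + Mφ * (ε/t) := hφnear (ε/t) (by positivity) zy hzyS hzyabs
    have hgeod := geod_ge (R := R) hShull hAne hS0 hD hD0 hCφ y t hzyS
    have h5 : t * φ zy ≤ t * (φ 0 + Mφ * (ε/t)) := mul_le_mul_of_nonneg_left hφzy htpos.le
    have h6 : t * (φ 0 + Mφ * (ε/t)) = t * φ 0 + Mφ * ε := by field_simp
    have h7 : t * (φ zy - R) = t * φ zy - t * R := by ring
    have h8 : t * (φ 0 - R) = t * φ 0 - t * R := by ring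
    rw [hudef]
    linarith
  have hcont_u : ∀ t, Continuous (u t) := fun t =>
    geod_continuous (R := R) hShull hAne hS0 hD hD0 hCφ t
  have hGint : ∀ t : ℝ, 1 ≤ t →
      Integrable (fun y : Fin l → ℝ => ∏ i, Real.exp (-((ε/t) * |y i|))) := by
    intro t ht
    have htpos : (0:ℝ) < t := lt_of_lt_of_le one_pos ht
    exact Integrable.fintype_prod (f := fun (_ : Fin l) (x : ℝ) => Real.exp (-((ε/t)*|x|)))
      (fun i => aux_int_exp_abs (div_pos hεpos htpos))
  have hexp_bound : ∀ t, 1 ≤ t → ∀ y, Real.exp (-(u t y)) ≤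
      Real.exp (t * (φ 0 - R) + Mφ * ε) * ∏ i, Real.exp (-((ε/t) * |y i|)) := by
    intro t ht y
    rw [← Real.exp_sum, ← Real.exp_add]
    apply Real.exp_le_exp.mpr
    have h1 := key_low t ht y
    have hsum : ∑ i, -((ε/t) * |y i|) = -((ε/t) * ∑ i, |y i|) := by
      rw [Finset.mul_sum, ← Finset.sum_neg_distrib]
    rw [hsum]
    linarith
  have hint_ut : ∀ t, 1 ≤ t → Integrable (fun y : Fin l → ℝ => Real.exp (-(u t y))) := by
    intro t ht
    refine Integrable.mono' ((hGint t ht).const_mul (Real.exp (t*(φ 0 - R)+Mφ*ε)))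
      ((Real.continuous_exp.comp (hcont_u t).neg).aestronglyMeasurable) ?_
    exact Filter.Eventually.of_forall fun y => by
      rw [Real.norm_eq_abs, abs_of_pos (Real.exp_pos _)]
      exact hexp_bound t ht y
  have hIub : ∀ t, 1 ≤ t → I t ≤ Real.exp (t*(φ 0 - R) + Mφ*ε) * (2/(ε/t))^l := by
    intro t ht
    have htpos : (0:ℝ) < t := lt_of_lt_of_le one_pos ht
    have h1 : I t ≤ ∫ y : Fin l → ℝ,
        Real.exp (t*(φ 0 - R)+Mφ*ε) * ∏ i, Real.exp (-((ε/t)*|y i|)) :=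
      integral_mono (hint_ut t ht) ((hGint t ht).const_mul _) (hexp_bound t ht)
    have hval : (∫ y : Fin l → ℝ, ∏ i, Real.exp (-((ε/t)*|y i|))) = (2/(ε/t))^l := by
      rw [volume_pi, integral_fintype_prod_eq_pow (ι := Fin l) (fun x : ℝ => Real.exp (-((ε/t)*|x|))),
        aux_int_exp_abs_val (div_pos hεpos htpos), Fintype.card_fin]
    rwa [integral_const_mul, hval] at h1
  -- upper bound for u, lower bound for I
  have key_up : ∀ t : ℝ, 0 ≤ t → ∀ y,
      u t y ≤ uPfun A (y - t • p₀.1) + Real.log cA - t * (φ 0 - R) := by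
    intro t ht y
    refine geod_le hShull hAne hS0 hD hD0 hCφ y t (fun w hw => ?_)
    have h1 : -(Real.log cA) ≤ legendre (uPfun A) w := by
      rw [hcAdef]; exact legU_lb hShull hAne hw
    have h2 : dotp p₀.1 w + p₀.2 ≤ φ w := hsub0 w hw
    have h3 : t * (dotp p₀.1 w + p₀.2 - R) ≤ t * (φ w - R) :=
      mul_le_mul_of_nonneg_left (by linarith) ht
    have h4 : dotp (y - t • p₀.1) w = dotp y w - t * dotp p₀.1 w := by
      rw [sub_eq_add_neg, ← neg_smul, dotp_add_smul]; ring
    have h5 : dotp (y - t • p₀.1) w ≤ uPfun A (y - t • p₀.1) :=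
      dotp_le_uPfun hShull hAne hw _
    have h6 : t * (dotp p₀.1 w + p₀.2 - R) = t * dotp p₀.1 w + t * (φ 0 - R) := by
      rw [hφ0eq]; ring
    linarith
  have huP_cont : Continuous (uPfun A) := by
    refine Continuous.log ?_ ?_
    · exact continuous_finset_sum _ (fun a _ =>
        Real.continuous_exp.comp (continuous_finset_sum _
          (fun i _ => (continuous_const.mul (continuous_apply i)))))
    · intro y
      have : (0:ℝ) < ∑ a ∈ A, Real.exp (dotp a y) :=
        Finset.sum_pos (fun a _ => Real.exp_pos _) hAne
      exact this.ne'
  have huP_lb : ∀ y : Fin l → ℝ, ε * (∑ i, |y i|) ≤ uPfun A y := by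
    intro y
    set zy : Fin l → ℝ := fun i => ε * (if 0 ≤ y i then 1 else -1) with hzydef
    have hzyabs : ∀ i, |zy i| ≤ ε := by
      intro i
      rw [hzydef]
      simp only []
      rw [abs_mul, abs_of_pos hεpos]
      split <;> simp
    have hzyS : zy ∈ S := hεS zy hzyabs
    have hdot : dotp y zy = ε * ∑ i, |y i| := by
      rw [dotp, Finset.mul_sum]
      refine Finset.sum_congr rfl fun i _ => ?_
      rw [hzydef]
      simp only []
      split
      · rename_i h; rw [abs_of_nonneg h]; ring
      · rename_i h; rw [abs_of_neg (lt_of_not_ge h)]; ring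
    have := dotp_le_uPfun hShull hAne hzyS y
    rw [← hdot]
    exact this
  have huP_int : Integrable (fun y : Fin l → ℝ => Real.exp (-(uPfun A y))) := by
    refine Integrable.mono'
      (Integrable.fintype_prod (f := fun (_ : Fin l) (x : ℝ) => Real.exp (-(ε*|x|)))
        (fun i => aux_int_exp_abs hεpos))
      ((Real.continuous_exp.comp huP_cont.neg).aestronglyMeasurable) ?_
    refine Filter.Eventually.of_forall fun y => ?_
    rw [Real.norm_eq_abs, abs_of_pos (Real.exp_pos _), ← Real.exp_sum]
    apply Real.exp_le_exp.mpr
    have hsum : ∑ i, -(ε * |y i|) = -(ε * ∑ i, |y i|) := by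
      rw [Finset.mul_sum, ← Finset.sum_neg_distrib]
    rw [hsum]
    linarith [huP_lb y]
  set c₀ : ℝ := ∫ y : Fin l → ℝ, Real.exp (-(uPfun A y)) with hc₀def
  have hc₀pos : 0 < c₀ := by
    rw [hc₀def]
    rw [integral_pos_iff_support_of_nonneg_ae
      (Filter.Eventually.of_forall fun y => (Real.exp_pos _).le) huP_int]
    have hsupp : Function.support (fun y : Fin l → ℝ => Real.exp (-(uPfun A y))) = univ := by
      ext y; simp [Function.mem_support, (Real.exp_pos _).ne']
    rw [hsupp]
    calc (0:ℝ≥0∞) < volume (Metric.ball (0 : Fin l → ℝ) 1) :=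
          Metric.measure_ball_pos volume 0 one_pos
      _ ≤ volume (univ : Set (Fin l → ℝ)) := measure_mono (subset_univ _)
  have hIlb : ∀ t, 1 ≤ t → Real.exp (t*(φ 0 - R)) * (cA⁻¹ * c₀) ≤ I t := by
    intro t ht
    have ht0 : (0:ℝ) ≤ t := le_trans zero_le_one ht
    have hshift : Integrable (fun y : Fin l → ℝ => Real.exp (-(uPfun A (y - t • p₀.1)))) :=
      huP_int.comp_sub_right (t • p₀.1)
    have hpt : ∀ y : Fin l → ℝ, Real.exp (t*(φ 0 - R)) * cA⁻¹ * Real.exp (-(uPfun A (y - t • p₀.1)))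
        ≤ Real.exp (-(u t y)) := by
      intro y
      have h1 := key_up t ht0 y
      have h2 : Real.exp (t*(φ 0 - R)) * cA⁻¹ * Real.exp (-(uPfun A (y - t • p₀.1)))
          = Real.exp (t*(φ 0 - R) + (-(Real.log cA)) + (-(uPfun A (y - t • p₀.1)))) := by
        rw [Real.exp_add, Real.exp_add, Real.exp_neg, Real.exp_neg, Real.exp_log hcApos]
      rw [h2]
      apply Real.exp_le_exp.mpr
      linarith
    have h3 : ∫ y : Fin l → ℝ, Real.exp (t*(φ 0 - R)) * cA⁻¹ * Real.exp (-(uPfun A (y - t • p₀.1)))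
        ≤ I t :=
      integral_mono ((hshift.const_mul _)) (hint_ut t ht) hpt
    have h4 : (∫ y : Fin l → ℝ, Real.exp (t*(φ 0 - R)) * cA⁻¹ * Real.exp (-(uPfun A (y - t • p₀.1))))
        = Real.exp (t*(φ 0 - R)) * (cA⁻¹ * c₀) := by
      rw [integral_const_mul]
      rw [show (∫ y : Fin l → ℝ, Real.exp (-(uPfun A (y - t • p₀.1)))) = c₀ from
        integral_sub_right_eq_self (fun y => Real.exp (-(uPfun A y))) (t • p₀.1)]
      ring
    rw [← h4]
    exact h3

  -- log asymptotics
  have hIpos : ∀ t, 1 ≤ t → 0 < I t := fun t ht =>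
    lt_of_lt_of_le (mul_pos (Real.exp_pos _) (mul_pos (inv_pos.mpr hcApos) hc₀pos)) (hIlb t ht)
  have hlog_low : ∀ t, 1 ≤ t →
      t*(φ 0 - R) + Real.log (cA⁻¹ * c₀) ≤ Real.log (I t) := by
    intro t ht
    have h1 := Real.log_le_log
      (mul_pos (Real.exp_pos _) (mul_pos (inv_pos.mpr hcApos) hc₀pos)) (hIlb t ht)
    rwa [Real.log_mul (Real.exp_ne_zero _)
      (ne_of_gt (mul_pos (inv_pos.mpr hcApos) hc₀pos)), Real.log_exp] at h1
  have hlog_up : ∀ t, 1 ≤ t →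
      Real.log (I t) ≤ t*(φ 0 - R) + Mφ*ε + (l:ℝ) * (Real.log (2/ε) + Real.log t) := by
    intro t ht
    have htpos : (0:ℝ) < t := lt_of_lt_of_le one_pos ht
    have h1 := Real.log_le_log (hIpos t ht) (hIub t ht)
    have h2 : (2/(ε/t)) = (2/ε) * t := by field_simp
    have hbpos : (0:ℝ) < 2/(ε/t) := div_pos two_pos (div_pos hεpos htpos)
    rw [Real.log_mul (Real.exp_ne_zero _) (ne_of_gt (pow_pos hbpos l)), Real.log_exp,
      Real.log_pow, h2, Real.log_mul (ne_of_gt (div_pos two_pos hεpos)) (ne_of_gt htpos)] at h1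
    linarith
  have tendsto_logI : Tendsto (fun t => Real.log (I t) / t) atTop (nhds (φ 0 - R)) := by
    have hlo : Tendsto (fun t : ℝ => (φ 0 - R) + Real.log (cA⁻¹*c₀) / t) atTop
        (nhds (φ 0 - R)) := by
      have h1 : Tendsto (fun t : ℝ => Real.log (cA⁻¹*c₀) / t) atTop (nhds 0) :=
        tendsto_const_nhds.div_atTop tendsto_id
      simpa using tendsto_const_nhds.add h1
    have hhi : Tendsto (fun t : ℝ =>
        (φ 0 - R) + (Mφ*ε + (l:ℝ) * Real.log (2/ε)) / t + (l:ℝ) * (Real.log t / t)) atTop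
        (nhds (φ 0 - R)) := by
      have h1 : Tendsto (fun t : ℝ => (Mφ*ε + (l:ℝ) * Real.log (2/ε)) / t) atTop (nhds 0) :=
        tendsto_const_nhds.div_atTop tendsto_id
      have h2 : Tendsto (fun t : ℝ => Real.log t / t) atTop (nhds 0) := by
        have h := Real.isLittleO_log_id_atTop.tendsto_div_nhds_zero
        simpa [Function.id_def] using h
      have h3 := ((tendsto_const_nhds (x := φ 0 - R)).add h1).add (h2.const_mul (l:ℝ))
      simpa [mul_comm] using h3
    refine tendsto_of_tendsto_of_tendsto_of_le_of_le' hlo hhi ?_ ?_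
    · filter_upwards [eventually_ge_atTop (1:ℝ)] with t ht
      have htpos : (0:ℝ) < t := lt_of_lt_of_le one_pos ht
      have h1 := hlog_low t ht
      have h2 : (t*(φ 0 - R) + Real.log (cA⁻¹ * c₀)) / t
          = (φ 0 - R) + Real.log (cA⁻¹*c₀) / t := by
        field_simp
      calc (φ 0 - R) + Real.log (cA⁻¹*c₀) / t
          = (t*(φ 0 - R) + Real.log (cA⁻¹ * c₀)) / t := h2.symm
        _ ≤ Real.log (I t) / t := by gcongr
    · filter_upwards [eventually_ge_atTop (1:ℝ)] with t ht
      have htpos : (0:ℝ) < t := lt_of_lt_of_le one_pos ht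
      have h1 := hlog_up t ht
      have h2 : (t*(φ 0 - R) + Mφ*ε + (l:ℝ) * (Real.log (2/ε) + Real.log t)) / t
          = (φ 0 - R) + (Mφ*ε + (l:ℝ) * Real.log (2/ε)) / t + (l:ℝ) * (Real.log t / t) := by
        field_simp
        ring
      calc Real.log (I t) / t
          ≤ (t*(φ 0 - R) + Mφ*ε + (l:ℝ) * (Real.log (2/ε) + Real.log t)) / t := by gcongr
        _ = _ := h2
  -- the linear part
  have hmeasS : MeasurableSet S := hScompact.isClosed.measurableSet
  have hrestrict : (volume : Measure (Fin l → ℝ)).restrict S = volume.restrict (interior S) :=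
    Measure.restrict_congr_set (S_ae_interior hSconv hScompact.isClosed)
  obtain ⟨Cg, hCg⟩ := hScompact.exists_bound_of_continuousOn hgcont
  have hlegU_cont := legU_contOn_interior hShull hAne hSconv
  have hlogcA0 : (0:ℝ) ≤ Real.log cA := Real.log_nonneg hcA1
  have int_legUg : IntegrableOn (fun z => legendre (uPfun A) z * g z) (interior S) := by
    refine integrableOn_interior_of_bounded hScompact
      (hlegU_cont.mul (hgcont.mono interior_subset)) (C := Real.log cA * Cg) ?_
    intro z hz
    have hzS : z ∈ S := interior_subset hz
    have h1 : |legendre (uPfun A) z| ≤ Real.log cA := by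
      rw [abs_le]
      constructor
      · rw [hcAdef]; exact legU_lb hShull hAne hzS
      · exact (legU_le_zero hShull hAne hzS).trans hlogcA0
    have h2 : |g z| ≤ Cg := by rw [← Real.norm_eq_abs]; exact hCg z hzS
    calc |legendre (uPfun A) z * g z| = |legendre (uPfun A) z| * |g z| := abs_mul _ _
      _ ≤ Real.log cA * Cg := mul_le_mul h1 h2 (abs_nonneg _) hlogcA0
  have int_legUg_S : IntegrableOn (fun z => legendre (uPfun A) z * g z) S := by
    rw [IntegrableOn, hrestrict]; exact int_legUg
  have hφcontS : ContinuousOn φ S := by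
    have hc : ContinuousOn (fun z => F.sup' hF (fun p => dotp p.1 z + p.2)) S :=
      ContinuousOn.finset_sup'_apply hF (fun p _ => Continuous.continuousOn (by
        apply Continuous.add ?_ continuous_const
        exact continuous_finset_sum _ (fun i _ => continuous_const.mul (continuous_apply i))))
    exact hc.congr hφF
  have int_phig : IntegrableOn (fun z => φ z * g z) S :=
    (hφcontS.mul hgcont).integrableOn_compact hScompact
  have int_g : IntegrableOn g S := hgcont.integrableOn_compact hScompact
  set c_g : ℝ := ∫ z in S, g z with hc_gdef
  have hc_gpos : 0 < c_g := by
    rw [hc_gdef, setIntegral_pos_iff_support_of_nonneg_ae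
      ((ae_restrict_iff' hmeasS).2 (Filter.Eventually.of_forall fun z hz => (hgpos z hz).le))
      int_g]
    refine lt_of_lt_of_le (Metric.measure_ball_pos volume 0 hδpos) (measure_mono ?_)
    intro x hx
    have hxS : x ∈ S := interior_subset (hδ hx)
    exact ⟨ne_of_gt (hgpos x hxS), hxS⟩
  set C1 : ℝ := ∫ z in S, legendre (uPfun A) z * g z with hC1def
  set Cphi : ℝ := ∫ z in S, φ z * g z with hCphidef
  have E_eq : ∀ t : ℝ, 0 ≤ t →
      (∫ z in S, legendre (u t) z * g z) = C1 + t * Cphi - t * R * c_g := by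
    intro t ht
    have hstep1 : (∫ z in S, legendre (u t) z * g z)
        = ∫ z in S, (legendre (uPfun A) z * g z + t * (φ z * g z) - (t*R) * g z) := by
      refine setIntegral_congr_fun hmeasS (fun z hz => ?_)
      rw [hudef]
      rw [legendre_geod_eq hShull hAne hS0 hD hD0 hCφ hφF hz ht]
      ring
    have intA : IntegrableOn (fun z => legendre (uPfun A) z * g z + t * (φ z * g z)) S :=
      int_legUg_S.add (int_phig.const_mul t)
    have intB : IntegrableOn (fun z => (t*R) * g z) S := int_g.const_mul (t*R)
    rw [hstep1, integral_sub intA intB, integral_add int_legUg_S (int_phig.const_mul t),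
      integral_const_mul, integral_const_mul]
  have Ding_eq : ∀ t : ℝ, 0 ≤ t →
      Ding S g (geodesicRay S A φ R t)
        = c_g⁻¹ * (C1 + t * Cphi - t * R * c_g) - Real.log (I t) := by
    intro t ht
    have h1 : Ding S g (geodesicRay S A φ R t)
        = c_g⁻¹ * (∫ z in S, legendre (u t) z * g z) - Real.log (I t) := rfl
    rw [h1, E_eq t ht]
  have hfinal : Tendsto (fun t : ℝ =>
      (c_g⁻¹*C1)/t + (c_g⁻¹*Cphi - R) - Real.log (I t)/t) atTop
      (nhds (c_g⁻¹ * Cphi - φ 0)) := by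
    have h1 : Tendsto (fun t : ℝ => (c_g⁻¹*C1)/t) atTop (nhds 0) :=
      tendsto_const_nhds.div_atTop tendsto_id
    have h2 := (h1.add (tendsto_const_nhds (x := c_g⁻¹*Cphi - R))).sub tendsto_logI
    have h3 : (0 + (c_g⁻¹*Cphi - R)) - (φ 0 - R) = c_g⁻¹ * Cphi - φ 0 := by ring
    rwa [h3] at h2
  refine Tendsto.congr' ?_ hfinal
  filter_upwards [eventually_ge_atTop (1:ℝ)] with t ht
  have htpos : (0:ℝ) < t := lt_of_lt_of_le one_pos ht
  have ht0 : (0:ℝ) ≤ t := htpos.le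
  rw [Ding_eq t ht0]
  have hR : c_g⁻¹ * (t * R * c_g) = t * R := by
    field_simp
  field_simp
  ring

end
end

section
/- Let P* ⊂ ℝ^l be a compact convex polytope with 0 in its interior, let h, g : P* → ℝ be continuous and strictly positive with A·h(z) ≤ g(z) ≤ B·h(z) on P* for constants A, B > 0, and assume ∫_{P*} z_k g(z) dz = 0 for every k = 1, …, l. Then for every u ∈ E¹(P*) and every a ∈ ℝ^l satisfying u*(z) ≥ ⟨a,z⟩ + u*(0) for all z ∈ P* (i.e. a lies in the subdifferential of u* at 0), one has J_h(u) ≤ (1/|P*|_h) ∫_{P*} ( u*(z) − ⟨a,z⟩ − u*(0) ) h(z) dz ≤ (B/A)·J_h(u). -/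
open MeasureTheory Real Set Filter

noncomputable section

variable {l : ℕ}

theorem statement5_aux (l : ℕ) (S : Set (Fin l → ℝ)) (hScompact : IsCompact S)
    (h0 : (0 : Fin l → ℝ) ∈ interior S)
    (h g φ : (Fin l → ℝ) → ℝ)
    (hhcont : ContinuousOn h S) (hhpos : ∀ z ∈ S, 0 < h z)
    (hgcont : ContinuousOn g S) (hgpos : ∀ z ∈ S, 0 < g z)
    (A B : ℝ) (hA : 0 < A) (hB : 0 < B)
    (hABbound : ∀ z ∈ S, A * h z ≤ g z ∧ g z ≤ B * h z)
    (hbary : ∀ k : Fin l, ∫ z in S, z k * g z = 0)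
    (hφint : IntegrableOn φ S volume)
    (c0 : ℝ) (hφlb : ∀ z, c0 ≤ φ z)
    (a : Fin l → ℝ) (ha : ∀ z ∈ S, dotp a z + φ 0 ≤ φ z) :
    (⨅ ab : (Fin l → ℝ) × ℝ,
        ((∫ z in S, h z)⁻¹ * (∫ z in S, (φ z - (dotp ab.1 z + ab.2)) * h z)
          - sInf ((fun z => φ z - (dotp ab.1 z + ab.2)) '' S)))
      ≤ (∫ z in S, h z)⁻¹ * (∫ z in S, (φ z - dotp a z - φ 0) * h z) ∧
    (∫ z in S, h z)⁻¹ * (∫ z in S, (φ z - dotp a z - φ 0) * h z)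
      ≤ (B / A) * (⨅ ab : (Fin l → ℝ) × ℝ,
        ((∫ z in S, h z)⁻¹ * (∫ z in S, (φ z - (dotp ab.1 z + ab.2)) * h z)
          - sInf ((fun z => φ z - (dotp ab.1 z + ab.2)) '' S))) := by
  have hSmeas : MeasurableSet S := hScompact.isClosed.measurableSet
  have h0S : (0 : Fin l → ℝ) ∈ S := interior_subset h0
  have hSne : S.Nonempty := ⟨0, h0S⟩
  have hdotc : ∀ w : Fin l → ℝ, Continuous fun z : Fin l → ℝ => dotp w z := by
    intro w
    simp only [dotp]
    exact continuous_finset_sum _ fun i _ => continuous_const.mul (continuous_apply i)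
  have hdot0 : ∀ w : Fin l → ℝ, dotp w (0 : Fin l → ℝ) = 0 := by
    intro w; simp [dotp]
  have hContInt : ∀ w : (Fin l → ℝ) → ℝ, ContinuousOn w S → IntegrableOn w S volume :=
    fun w hw => hw.integrableOn_compact hScompact
  have hPhiMul : ∀ w : (Fin l → ℝ) → ℝ, ContinuousOn w S →
      IntegrableOn (fun z => φ z * w z) S volume := by
    intro w hw
    obtain ⟨C, hC⟩ := hScompact.exists_bound_of_continuousOn hw
    have hwm : AEStronglyMeasurable w (volume.restrict S) :=
      hw.aestronglyMeasurable hSmeas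
    have hbound : ∀ᵐ x ∂(volume.restrict S), ‖w x‖ ≤ C :=
      (ae_restrict_mem hSmeas).mono fun x hx => hC x hx
    have h1 := Integrable.bdd_mul (c := C) hφint hwm hbound
    exact h1.congr (Filter.Eventually.of_forall fun z => mul_comm (w z) (φ z))
  have hMix : ∀ c w : (Fin l → ℝ) → ℝ, ContinuousOn c S → ContinuousOn w S →
      IntegrableOn (fun z => (φ z - c z) * w z) S volume := by
    intro c w hc hw
    have h1 := (hPhiMul w hw).sub (hContInt _ (hc.mul hw))
    exact h1.congr (Filter.Eventually.of_forall fun z => (sub_mul (φ z) (c z) (w z)).symm)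
  have hGen : ∀ c ρ : (Fin l → ℝ) → ℝ, ContinuousOn c S → ContinuousOn ρ S →
      ∀ f : (Fin l → ℝ) → ℝ, (∀ z, f z = (φ z - c z) * ρ z) → IntegrableOn f S volume :=
    fun c ρ hc hρ f hf =>
      (hMix c ρ hc hρ).congr (Filter.Eventually.of_forall fun z => (hf z).symm)
  have hvol : 0 < (volume S).toReal := by
    refine ENNReal.toReal_pos ?_ hScompact.measure_lt_top.ne
    have h1 : 0 < volume (interior S) := isOpen_interior.measure_pos volume ⟨0, h0⟩
    exact (lt_of_lt_of_le h1 (measure_mono interior_subset)).ne'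
  obtain ⟨z₀, hz₀S, hz₀min⟩ := hScompact.exists_isMinOn hSne hhcont
  have hIh : 0 < ∫ z in S, h z := by
    have h2 : ∫ _z in S, (h z₀ : ℝ) ≤ ∫ z in S, h z :=
      setIntegral_mono_on (integrableOn_const hScompact.measure_lt_top.ne)
        (hContInt h hhcont) hSmeas fun z hz => hz₀min hz
    rw [setIntegral_const, smul_eq_mul] at h2
    exact lt_of_lt_of_le (mul_pos hvol (hhpos z₀ hz₀S)) h2
  have hIg : 0 ≤ ∫ z in S, g z := setIntegral_nonneg hSmeas fun z hz => (hgpos z hz).le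
  have hzig : ∀ i : Fin l, IntegrableOn (fun z : Fin l → ℝ => z i * g z) S volume :=
    fun i => hContInt _ (((continuous_apply i).continuousOn).mul hgcont)
  have hdotg : ∀ w : Fin l → ℝ, ∫ z in S, dotp w z * g z = 0 := by
    intro w
    have e1 : ∀ z : Fin l → ℝ, dotp w z * g z = ∑ i, w i * (z i * g z) := by
      intro z
      rw [dotp, Finset.sum_mul]
      exact Finset.sum_congr rfl fun i _ => by ring
    calc ∫ z in S, dotp w z * g z = ∫ z in S, ∑ i, w i * (z i * g z) :=
          integral_congr_ae (Filter.Eventually.of_forall fun z => e1 z)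
      _ = ∑ i, ∫ z in S, w i * (z i * g z) :=
          integral_finset_sum _ fun i _ => (hzig i).const_mul (w i)
      _ = ∑ i, w i * ∫ z in S, z i * g z :=
          Finset.sum_congr rfl fun i _ => integral_const_mul _ _
      _ = 0 := by simp [hbary]
  -- per-p facts
  have hbddp : ∀ p : (Fin l → ℝ) × ℝ,
      BddBelow ((fun z => φ z - (dotp p.1 z + p.2)) '' S) := by
    intro p
    have hLcont : ContinuousOn (fun z : Fin l → ℝ => dotp p.1 z + p.2) S :=
      (hdotc p.1).continuousOn.add continuousOn_const
    obtain ⟨CL, hCL⟩ := hScompact.exists_bound_of_continuousOn hLcont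
    refine ⟨c0 - CL, ?_⟩
    rintro x ⟨z, hz, rfl⟩
    have h1 := hφlb z
    have h2 := hCL z hz
    rw [Real.norm_eq_abs] at h2
    have h3 : dotp p.1 z + p.2 ≤ CL := (le_abs_self _).trans h2
    simp only
    linarith
  have hmle : ∀ (p : (Fin l → ℝ) × ℝ), ∀ z ∈ S,
      sInf ((fun z => φ z - (dotp p.1 z + p.2)) '' S) ≤ φ z - (dotp p.1 z + p.2) :=
    fun p z hz => csInf_le (hbddp p) ⟨z, hz, rfl⟩
  -- the identity ∫ (fp - m) ρ = ∫ fp ρ - m ∫ ρ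
  have hsplit : ∀ (p : (Fin l → ℝ) × ℝ) (m : ℝ) (ρ : (Fin l → ℝ) → ℝ), ContinuousOn ρ S →
      ∫ z in S, (φ z - (dotp p.1 z + p.2) - m) * ρ z
        = (∫ z in S, (φ z - (dotp p.1 z + p.2)) * ρ z) - m * ∫ z in S, ρ z := by
    intro p m ρ hρ
    have hLcont : ContinuousOn (fun z : Fin l → ℝ => dotp p.1 z + p.2) S :=
      (hdotc p.1).continuousOn.add continuousOn_const
    have i1 : IntegrableOn (fun z => (φ z - (dotp p.1 z + p.2)) * ρ z) S volume :=
      hMix _ _ hLcont hρ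
    have i2 : IntegrableOn (fun z => m * ρ z) S volume := (hContInt ρ hρ).const_mul m
    rw [← integral_const_mul, ← integral_sub i1 i2]
    exact integral_congr_ae (Filter.Eventually.of_forall fun z => by ring)
  -- nonnegativity of each term of the infimum
  have hFnn : ∀ p : (Fin l → ℝ) × ℝ,
      0 ≤ (∫ z in S, h z)⁻¹ * (∫ z in S, (φ z - (dotp p.1 z + p.2)) * h z)
          - sInf ((fun z => φ z - (dotp p.1 z + p.2)) '' S) := by
    intro p
    rw [sub_nonneg, inv_mul_eq_div, le_div_iff₀ hIh]
    have h1 : 0 ≤ ∫ z in S,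
        (φ z - (dotp p.1 z + p.2) - sInf ((fun z => φ z - (dotp p.1 z + p.2)) '' S)) * h z :=
      setIntegral_nonneg hSmeas fun z hz =>
        mul_nonneg (by have := hmle p z hz; linarith) (hhpos z hz).le
    have h2 := hsplit p (sInf ((fun z => φ z - (dotp p.1 z + p.2)) '' S)) h hhcont
    linarith
  -- ψ := φ - ⟨a,·⟩ - φ(0) facts
  have hψnn : ∀ z ∈ S, 0 ≤ φ z - dotp a z - φ 0 := fun z hz => by
    have := ha z hz; linarith
  have hacont : ContinuousOn (fun z : Fin l → ℝ => dotp a z + φ 0) S :=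
    (hdotc a).continuousOn.add continuousOn_const
  have hψh : IntegrableOn (fun z => (φ z - dotp a z - φ 0) * h z) S volume :=
    hGen _ h hacont hhcont _ fun z => by ring
  have hψg : IntegrableOn (fun z => (φ z - dotp a z - φ 0) * g z) S volume :=
    hGen _ g hacont hgcont _ fun z => by ring
  have hkey2 : ∀ p : (Fin l → ℝ) × ℝ,
      (∫ z in S, h z)⁻¹ * (∫ z in S, (φ z - dotp a z - φ 0) * h z)
        ≤ (B / A) * ((∫ z in S, h z)⁻¹ * (∫ z in S, (φ z - (dotp p.1 z + p.2)) * h z)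
            - sInf ((fun z => φ z - (dotp p.1 z + p.2)) '' S)) := by
    intro p
    set m : ℝ := sInf ((fun z => φ z - (dotp p.1 z + p.2)) '' S) with hm
    have hLcont : ContinuousOn (fun z : Fin l → ℝ => dotp p.1 z + p.2) S :=
      (hdotc p.1).continuousOn.add continuousOn_const
    have hfpg : IntegrableOn (fun z => (φ z - (dotp p.1 z + p.2)) * g z) S volume :=
      hMix _ _ hLcont hgcont
    have hdag1 : IntegrableOn (fun z => dotp p.1 z * g z) S volume :=
      hContInt _ ((hdotc p.1).continuousOn.mul hgcont)
    have hdag2 : IntegrableOn (fun z => dotp a z * g z) S volume :=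
      hContInt _ ((hdotc a).continuousOn.mul hgcont)
    have hgint : IntegrableOn g S volume := hContInt g hgcont
    have hfpmg : IntegrableOn (fun z => (φ z - (dotp p.1 z + p.2) - m) * g z) S volume :=
      hGen (fun z => dotp p.1 z + p.2 + m) g (hLcont.add continuousOn_const) hgcont _
        fun z => by ring
    have hfpmh : IntegrableOn (fun z => (φ z - (dotp p.1 z + p.2) - m) * h z) S volume :=
      hGen (fun z => dotp p.1 z + p.2 + m) h (hLcont.add continuousOn_const) hhcont _
        fun z => by ring
    have step1 : ∫ z in S, (φ z - dotp a z - φ 0) * h z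
        ≤ A⁻¹ * ∫ z in S, (φ z - dotp a z - φ 0) * g z := by
      rw [← integral_const_mul]
      refine setIntegral_mono_on hψh (hψg.const_mul _) hSmeas fun z hz => ?_
      have h1 := (hABbound z hz).1
      have h2 := hψnn z hz
      have h3 : h z ≤ A⁻¹ * g z := by
        rw [inv_mul_eq_div, le_div_iff₀ hA]; linarith
      calc (φ z - dotp a z - φ 0) * h z
          ≤ (φ z - dotp a z - φ 0) * (A⁻¹ * g z) := mul_le_mul_of_nonneg_left h3 h2
        _ = A⁻¹ * ((φ z - dotp a z - φ 0) * g z) := by ring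
    have step2 : ∫ z in S, (φ z - dotp a z - φ 0) * g z
        = (∫ z in S, (φ z - (dotp p.1 z + p.2)) * g z) + (p.2 - φ 0) * ∫ z in S, g z := by
      have e2 : ∫ z in S, (φ z - dotp a z - φ 0) * g z
          = ∫ z in S, ((φ z - (dotp p.1 z + p.2)) * g z + dotp p.1 z * g z
              - dotp a z * g z + (p.2 - φ 0) * g z) :=
        integral_congr_ae (Filter.Eventually.of_forall fun z => by ring)
      have i1 : IntegrableOn
          (fun z => (φ z - (dotp p.1 z + p.2)) * g z + dotp p.1 z * g z) S volume :=
        hfpg.add hdag1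
      have i2 : IntegrableOn
          (fun z => (φ z - (dotp p.1 z + p.2)) * g z + dotp p.1 z * g z - dotp a z * g z)
          S volume := i1.sub hdag2
      have i3 : IntegrableOn (fun z => (p.2 - φ 0) * g z) S volume := hgint.const_mul _
      rw [e2, integral_add i2 i3, integral_sub i1 hdag2, integral_add hfpg hdag1,
        hdotg p.1, hdotg a, integral_const_mul]
      ring
    have step3 : p.2 - φ 0 ≤ -m := by
      have h1 := hmle p 0 h0S
      rw [hdot0 p.1] at h1
      linarith
    have step4 : (∫ z in S, (φ z - (dotp p.1 z + p.2)) * g z) - m * ∫ z in S, g z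
        ≤ B * ∫ z in S, (φ z - (dotp p.1 z + p.2) - m) * h z := by
      rw [← hsplit p m g hgcont, ← integral_const_mul]
      refine setIntegral_mono_on hfpmg (hfpmh.const_mul _) hSmeas fun z hz => ?_
      have h1 := (hABbound z hz).2
      have h2 : 0 ≤ φ z - (dotp p.1 z + p.2) - m := by have := hmle p z hz; linarith
      calc (φ z - (dotp p.1 z + p.2) - m) * g z
          ≤ (φ z - (dotp p.1 z + p.2) - m) * (B * h z) := mul_le_mul_of_nonneg_left h1 h2
        _ = B * ((φ z - (dotp p.1 z + p.2) - m) * h z) := by ring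
    have final : ∫ z in S, (φ z - dotp a z - φ 0) * h z
        ≤ (B / A) * ((∫ z in S, (φ z - (dotp p.1 z + p.2)) * h z) - m * ∫ z in S, h z) := by
      have h4 : ∫ z in S, (φ z - dotp a z - φ 0) * g z
          ≤ (∫ z in S, (φ z - (dotp p.1 z + p.2)) * g z) - m * ∫ z in S, g z := by
        rw [step2]
        linarith [mul_le_mul_of_nonneg_right step3 hIg]
      have h5 := hsplit p m h hhcont
      calc ∫ z in S, (φ z - dotp a z - φ 0) * h z
          ≤ A⁻¹ * ∫ z in S, (φ z - dotp a z - φ 0) * g z := step1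
        _ ≤ A⁻¹ * ((∫ z in S, (φ z - (dotp p.1 z + p.2)) * g z) - m * ∫ z in S, g z) :=
            mul_le_mul_of_nonneg_left h4 (inv_nonneg.2 hA.le)
        _ ≤ A⁻¹ * (B * ∫ z in S, (φ z - (dotp p.1 z + p.2) - m) * h z) :=
            mul_le_mul_of_nonneg_left step4 (inv_nonneg.2 hA.le)
        _ = (B / A) * ((∫ z in S, (φ z - (dotp p.1 z + p.2)) * h z) - m * ∫ z in S, h z) := by
            rw [h5]; field_simp
    have e6 : (B / A) * ((∫ z in S, h z)⁻¹ * (∫ z in S, (φ z - (dotp p.1 z + p.2)) * h z) - m)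
        = (∫ z in S, h z)⁻¹ * ((B / A) * ((∫ z in S, (φ z - (dotp p.1 z + p.2)) * h z)
            - m * ∫ z in S, h z)) := by
      field_simp [hIh.ne']
    rw [e6]
    exact mul_le_mul_of_nonneg_left final (inv_nonneg.2 hIh.le)
  constructor
  · refine le_trans (ciInf_le ⟨0, ?_⟩ ((a, φ 0) : (Fin l → ℝ) × ℝ)) ?_
    · rintro x ⟨p, rfl⟩; exact hFnn p
    · dsimp only
      have hinf0 : sInf ((fun z => φ z - (dotp a z + φ 0)) '' S) = 0 := by
        apply le_antisymm
        · refine csInf_le (hbddp ((a, φ 0) : (Fin l → ℝ) × ℝ)) ⟨0, h0S, ?_⟩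
          simp [hdot0 a]
        · refine le_csInf (hSne.image _) ?_
          rintro x ⟨z, hz, rfl⟩
          have := ha z hz
          simp only
          linarith
      rw [hinf0, sub_zero]
      refine le_of_eq ?_
      congr 1
      exact integral_congr_ae (Filter.Eventually.of_forall fun z => by ring)
  · have h2 : A / B * ((∫ z in S, h z)⁻¹ * (∫ z in S, (φ z - dotp a z - φ 0) * h z))
        ≤ ⨅ ab : (Fin l → ℝ) × ℝ, ((∫ z in S, h z)⁻¹
            * (∫ z in S, (φ z - (dotp ab.1 z + ab.2)) * h z)
          - sInf ((fun z => φ z - (dotp ab.1 z + ab.2)) '' S)) := by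
      refine le_ciInf fun p => ?_
      have h4 := mul_le_mul_of_nonneg_left (hkey2 p) (div_pos hA hB).le
      calc A / B * ((∫ z in S, h z)⁻¹ * (∫ z in S, (φ z - dotp a z - φ 0) * h z))
          ≤ A / B * ((B / A) * ((∫ z in S, h z)⁻¹
              * (∫ z in S, (φ z - (dotp p.1 z + p.2)) * h z)
            - sInf ((fun z => φ z - (dotp p.1 z + p.2)) '' S))) := h4
        _ = _ := by field_simp
    have h6 := mul_le_mul_of_nonneg_left h2 (div_pos hB hA).le
    calc (∫ z in S, h z)⁻¹ * (∫ z in S, (φ z - dotp a z - φ 0) * h z)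
        = (B / A) * (A / B * ((∫ z in S, h z)⁻¹
            * (∫ z in S, (φ z - dotp a z - φ 0) * h z))) := by
          field_simp
      _ ≤ _ := h6


/-- Lemma 5.2. Under the comparison `A·h ≤ g ≤ B·h` and the vanishing
of the `g`-weighted barycenter of `P*`, for every `u ∈ E¹(P*)` and every `a` in the
subdifferential of `u*` at `0`,
`J_h(u) ≤ (1/|P*|_h) ∫_{P*} (u* − ⟨a,·⟩ − u*(0)) h dz ≤ (B/A) J_h(u)`. -/
theorem statement5 (l : ℕ) (S : Set (Fin l → ℝ))
    (hScompact : IsCompact S) (hSconv : Convex ℝ S)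
    (hSpoly : ∃ F : Finset (Fin l → ℝ), S = convexHull ℝ (F : Set (Fin l → ℝ)))
    (h0 : (0 : Fin l → ℝ) ∈ interior S)
    (h g : (Fin l → ℝ) → ℝ)
    (hhcont : ContinuousOn h S) (hhpos : ∀ z ∈ S, 0 < h z)
    (hgcont : ContinuousOn g S) (hgpos : ∀ z ∈ S, 0 < g z)
    (A B : ℝ) (hA : 0 < A) (hB : 0 < B)
    (hABbound : ∀ z ∈ S, A * h z ≤ g z ∧ g z ≤ B * h z)
    (hbary : ∀ k : Fin l, ∫ z in S, z k * g z = 0)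
    (u : (Fin l → ℝ) → ℝ) (hu : InE1 S u)
    (a : Fin l → ℝ) (ha : ∀ z ∈ S, dotp a z + legendre u 0 ≤ legendre u z) :
    Jred S h u ≤
        (∫ z in S, h z)⁻¹ *
          (∫ z in S, (legendre u z - dotp a z - legendre u 0) * h z) ∧
      (∫ z in S, h z)⁻¹ *
          (∫ z in S, (legendre u z - dotp a z - legendre u 0) * h z) ≤
        (B / A) * Jred S h u := by
  have hlb : ∀ z, min 0 (-u 0) ≤ legendre u z := by
    intro z
    by_cases hb : BddAbove (Set.range fun y : Fin l → ℝ => dotp y z - u y)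
    · have h1 : dotp (0 : Fin l → ℝ) z - u 0 ≤ legendre u z := le_ciSup hb 0
      have h2 : dotp (0 : Fin l → ℝ) z = 0 := by simp [dotp]
      rw [h2] at h1
      exact le_trans (min_le_right _ _) (by linarith)
    · rw [legendre, Real.iSup_of_not_bddAbove hb]
      exact min_le_left _ _
  have := statement5_aux l S hScompact h0 h g (legendre u) hhcont hhpos hgcont hgpos
    A B hA hB hABbound hbary hu.2.2 (min 0 (-u 0)) hlb a ha
  exact this

end
end

section
/- For every τ ∈ [0,1] and every z ∈ [0,1), one has ((2−z)/(2+z)) · ((1+z)/(1−z))^τ · exp( (12/5)(1−τ) z ) ≥ 1. -/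
open Real

/-- Example 7.1. For every `τ ∈ [0,1]` and `z ∈ [0,1)`,
`((2−z)/(2+z)) · ((1+z)/(1−z))^τ · e^{(12/5)(1−τ)z} ≥ 1`. -/
theorem statement15 (τ : ℝ) (hτ : τ ∈ Set.Icc (0 : ℝ) 1)
    (z : ℝ) (hz : z ∈ Set.Ico (0 : ℝ) 1) :
    1 ≤ ((2 - z) / (2 + z)) * ((1 + z) / (1 - z)) ^ τ *
      Real.exp ((12 / 5) * (1 - τ) * z) := by
  obtain ⟨hτ0, hτ1⟩ := hτ
  obtain ⟨hz0, hz1⟩ := hz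
  have h2z : (0:ℝ) < 2 - z := by linarith
  have h2z' : (0:ℝ) < 2 + z := by linarith
  have h1z : (0:ℝ) < 1 - z := by linarith
  have h1z' : (0:ℝ) < 1 + z := by linarith
  set a : ℝ := (2 - z) / (2 + z) with ha_def
  set b : ℝ := (1 + z) / (1 - z) with hb_def
  have ha : 0 < a := div_pos h2z h2z'
  have hb : 0 < b := div_pos h1z' h1z
  have hE : 0 < Real.exp (12 / 5 * z) := Real.exp_pos _
  -- P ≥ 1
  have hexp : 1 + 12 / 5 * z ≤ Real.exp (12 / 5 * z) := by
    have := Real.add_one_le_exp (12 / 5 * z); linarith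
  have hP : 1 ≤ a * Real.exp (12 / 5 * z) := by
    rw [ha_def, div_mul_eq_mul_div, le_div_iff₀ h2z']
    have h1 : (2 - z) * (1 + 12 / 5 * z) ≤ (2 - z) * Real.exp (12 / 5 * z) := by
      apply mul_le_mul_of_nonneg_left hexp (le_of_lt h2z)
    nlinarith
  -- Q ≥ 1
  have hQ : 1 ≤ a * b := by
    rw [ha_def, hb_def, div_mul_div_comm, le_div_iff₀ (by positivity)]
    nlinarith
  -- the expression equals P^(1-τ) * Q^τ
  have key : a * b ^ τ * Real.exp ((12 / 5) * (1 - τ) * z)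
      = (a * Real.exp (12 / 5 * z)) ^ (1 - τ) * (a * b) ^ τ := by
    rw [Real.mul_rpow ha.le hE.le, Real.mul_rpow ha.le hb.le,
      ← Real.exp_mul]
    have : a ^ (1 - τ) * Real.exp (12 / 5 * z * (1 - τ)) * (a ^ τ * b ^ τ)
        = (a ^ (1 - τ) * a ^ τ) * b ^ τ * Real.exp (12 / 5 * z * (1 - τ)) := by ring
    rw [this, ← Real.rpow_add ha, sub_add_cancel, Real.rpow_one,
      show (12:ℝ) / 5 * (1 - τ) * z = 12 / 5 * z * (1 - τ) from by ring]
  rw [key]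
  have h1 : 1 ≤ (a * Real.exp (12 / 5 * z)) ^ (1 - τ) :=
    Real.one_le_rpow hP (by linarith)
  have h2 : 1 ≤ (a * b) ^ τ := Real.one_le_rpow hQ hτ0
  nlinarith
end

section
/- For b ∈ ℝ and τ ∈ [0,1] define I_τ(b) := ∫_{−1}^{1} z (1 + z/2) (−6 b z + b + 1)^τ e^{(1−τ)(−6 b z + b)} dz. Then for every τ ∈ [0,1], I_τ(−1/7) > 0 and I_τ(1/5) < 0. -/
open Real intervalIntegral

/-- The barycenter integral `I_τ(b)` of Example 7.1 for the KSM-manifold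
`ℙ(𝒪_{ℙ¹}(1) ⊕ 𝒪_{ℙ¹})`: `I_τ(b) = ∫_{−1}^{1} z (1 + z/2) (−6bz + b + 1)^τ
e^{(1−τ)(−6bz + b)} dz` (here `x ^ τ` is the real power). -/
noncomputable def Iint (τ b : ℝ) : ℝ :=
  ∫ z in (-1 : ℝ)..1,
    z * (1 + z / 2) * (-6 * b * z + b + 1) ^ τ *
      Real.exp ((1 - τ) * (-6 * b * z + b))

/-- Symmetrization of an interval integral over `[-1,1]`. -/
lemma integral_symm_pair (G : ℝ → ℝ) (hG : Continuous G) :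
    (∫ z in (-1:ℝ)..1, G z) = ∫ z in (0:ℝ)..1, (G z + G (-z)) := by
  have h1 : (∫ z in (-1:ℝ)..0, G z) + (∫ z in (0:ℝ)..1, G z)
      = ∫ z in (-1:ℝ)..1, G z :=
    integral_add_adjacent_intervals (hG.intervalIntegrable _ _) (hG.intervalIntegrable _ _)
  have h2 : (∫ z in (0:ℝ)..1, G (-z)) = ∫ z in (-1:ℝ)..0, G z := by
    rw [intervalIntegral.integral_comp_neg]; norm_num
  have hg : Continuous fun z : ℝ => G (-z) := hG.comp continuous_neg
  rw [intervalIntegral.integral_add (hG.intervalIntegrable _ _)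
      (hg.intervalIntegrable _ _), ← h1, ← h2]
  ring

/-- Pointwise positivity of the symmetrized integrand for `b = -1/7`. -/
lemma key_neg (τ x : ℝ) (hτ0 : 0 ≤ τ) (hτ1 : τ ≤ 1) (h0 : 0 < x) (h1 : x < 1) :
    0 < x * (1 + x / 2) * (-6 * (-1 / 7) * x + -1 / 7 + 1) ^ τ *
          Real.exp ((1 - τ) * (-6 * (-1 / 7) * x + -1 / 7))
        + -x * (1 + -x / 2) * (-6 * (-1 / 7) * -x + -1 / 7 + 1) ^ τ *
          Real.exp ((1 - τ) * (-6 * (-1 / 7) * -x + -1 / 7)) := by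
  rw [show -6 * (-1 / 7 : ℝ) * x + -1 / 7 + 1 = (6 * x + 6) / 7 by ring,
      show -6 * (-1 / 7 : ℝ) * -x + -1 / 7 + 1 = (6 - 6 * x) / 7 by ring,
      show -6 * (-1 / 7 : ℝ) * x + -1 / 7 = (6 * x - 1) / 7 by ring,
      show -6 * (-1 / 7 : ℝ) * -x + -1 / 7 = (-6 * x - 1) / 7 by ring]
  have hA : (0:ℝ) < (6 * x + 6) / 7 := by linarith
  have hC : (0:ℝ) < (6 - 6 * x) / 7 := by linarith
  have hP : ((6 - 6 * x) / 7) ^ τ ≤ ((6 * x + 6) / 7) ^ τ :=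
    Real.rpow_le_rpow hC.le (by linarith) hτ0
  have hE : Real.exp ((1 - τ) * ((-6 * x - 1) / 7)) ≤
      Real.exp ((1 - τ) * ((6 * x - 1) / 7)) := by
    apply Real.exp_le_exp.2
    nlinarith [mul_nonneg (by linarith : (0:ℝ) ≤ 1 - τ) h0.le]
  have hPp : 0 < ((6 * x + 6) / 7) ^ τ := Real.rpow_pos_of_pos hA τ
  have hCp : 0 < ((6 - 6 * x) / 7) ^ τ := Real.rpow_pos_of_pos hC τ
  have hEp : 0 < Real.exp ((1 - τ) * ((6 * x - 1) / 7)) := Real.exp_pos _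
  have hEm : 0 < Real.exp ((1 - τ) * ((-6 * x - 1) / 7)) := Real.exp_pos _
  have h2 : ((6 - 6 * x) / 7) ^ τ * Real.exp ((1 - τ) * ((-6 * x - 1) / 7)) ≤
      ((6 * x + 6) / 7) ^ τ * Real.exp ((1 - τ) * ((6 * x - 1) / 7)) :=
    mul_le_mul hP hE hEm.le hPp.le
  have h3 : (1 - x / 2) * (((6 - 6 * x) / 7) ^ τ * Real.exp ((1 - τ) * ((-6 * x - 1) / 7)))
      < (1 + x / 2) * (((6 * x + 6) / 7) ^ τ * Real.exp ((1 - τ) * ((6 * x - 1) / 7))) := by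
    nlinarith [mul_pos hPp hEp, mul_pos hCp hEm]
  nlinarith [mul_pos h0 (sub_pos.2 h3)]

/-- Pointwise negativity of the symmetrized integrand for `b = 1/5`. -/
lemma key_pos (τ x : ℝ) (hτ0 : 0 ≤ τ) (hτ1 : τ ≤ 1) (h0 : 0 < x) (h1 : x < 1) :
    0 < -(x * (1 + x / 2) * (-6 * (1 / 5) * x + 1 / 5 + 1) ^ τ *
          Real.exp ((1 - τ) * (-6 * (1 / 5) * x + 1 / 5))
        + -x * (1 + -x / 2) * (-6 * (1 / 5) * -x + 1 / 5 + 1) ^ τ *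
          Real.exp ((1 - τ) * (-6 * (1 / 5) * -x + 1 / 5))) := by
  rw [show -6 * (1 / 5 : ℝ) * x + 1 / 5 + 1 = (6 - 6 * x) / 5 by ring,
      show -6 * (1 / 5 : ℝ) * -x + 1 / 5 + 1 = (6 * x + 6) / 5 by ring,
      show -6 * (1 / 5 : ℝ) * x + 1 / 5 = (1 - 6 * x) / 5 by ring,
      show -6 * (1 / 5 : ℝ) * -x + 1 / 5 = (6 * x + 1) / 5 by ring]
  have hA : (0:ℝ) < (6 - 6 * x) / 5 := by linarith
  have hB : (0:ℝ) < (6 * x + 6) / 5 := by linarith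
  have ha : (0:ℝ) < 1 + x / 2 := by linarith
  have hc : (0:ℝ) < 1 - x / 2 := by linarith
  have hAp : 0 < ((6 - 6 * x) / 5) ^ τ := Real.rpow_pos_of_pos hA τ
  have hBp : 0 < ((6 * x + 6) / 5) ^ τ := Real.rpow_pos_of_pos hB τ
  have main : (1 + x / 2) * (((6 - 6 * x) / 5) ^ τ *
        Real.exp ((1 - τ) * ((1 - 6 * x) / 5)))
      < (1 - x / 2) * (((6 * x + 6) / 5) ^ τ *
        Real.exp ((1 - τ) * ((6 * x + 1) / 5))) := by
    have hL : 0 < (1 + x / 2) * (((6 - 6 * x) / 5) ^ τ *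
        Real.exp ((1 - τ) * ((1 - 6 * x) / 5))) :=
      mul_pos ha (mul_pos hAp (Real.exp_pos _))
    have hR : 0 < (1 - x / 2) * (((6 * x + 6) / 5) ^ τ *
        Real.exp ((1 - τ) * ((6 * x + 1) / 5))) :=
      mul_pos hc (mul_pos hBp (Real.exp_pos _))
    rw [← Real.exp_log hL, ← Real.exp_log hR]
    apply Real.exp_lt_exp.2
    rw [Real.log_mul ha.ne' (mul_pos hAp (Real.exp_pos _)).ne',
        Real.log_mul hAp.ne' (Real.exp_pos _).ne',
        Real.log_mul hc.ne' (mul_pos hBp (Real.exp_pos _)).ne',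
        Real.log_mul hBp.ne' (Real.exp_pos _).ne',
        Real.log_rpow hA, Real.log_rpow hB, Real.log_exp, Real.log_exp]
    have F2 : Real.log (1 + x / 2) + Real.log ((6 - 6 * x) / 5)
        < Real.log (1 - x / 2) + Real.log ((6 * x + 6) / 5) := by
      have hm : (1 + x / 2) * ((6 - 6 * x) / 5) < (1 - x / 2) * ((6 * x + 6) / 5) := by
        nlinarith
      have := Real.log_lt_log (mul_pos ha hA) hm
      rwa [Real.log_mul ha.ne' hA.ne', Real.log_mul hc.ne' hB.ne'] at this
    have F1 : Real.log (1 + x / 2) < Real.log (1 - x / 2) + 12 * x / 5 := by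
      have he : 12 * x / 5 + 1 < Real.exp (12 * x / 5) :=
        Real.add_one_lt_exp (ne_of_gt (by linarith : (0:ℝ) < 12 * x / 5))
      have hm : 1 + x / 2 < (1 - x / 2) * Real.exp (12 * x / 5) := by
        nlinarith [Real.exp_pos (12 * x / 5)]
      have := Real.log_lt_log ha hm
      rwa [Real.log_mul hc.ne' (Real.exp_pos _).ne', Real.log_exp] at this
    rcases lt_or_ge τ 1 with h | h
    · nlinarith [mul_nonneg hτ0
        (by linarith : (0:ℝ) ≤ Real.log (1 - x / 2) + Real.log ((6 * x + 6) / 5)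
          - Real.log (1 + x / 2) - Real.log ((6 - 6 * x) / 5)),
        mul_pos (by linarith : (0:ℝ) < 1 - τ)
        (by linarith : (0:ℝ) < Real.log (1 - x / 2) + 12 * x / 5 - Real.log (1 + x / 2))]
    · have hτe : τ = 1 := le_antisymm hτ1 h
      subst hτe
      nlinarith [F2]
  nlinarith [mul_pos h0 (sub_pos.2 main)]

/-- Example 7.1. For every `τ ∈ [0,1]`, `I_τ(−1/7) > 0` and
`I_τ(1/5) < 0`. -/
theorem statement16 (τ : ℝ) (hτ : τ ∈ Set.Icc (0 : ℝ) 1) :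
    0 < Iint τ (-1 / 7) ∧ Iint τ (1 / 5) < 0 := by
  obtain ⟨hτ0, hτ1⟩ := hτ
  have hc : ∀ b : ℝ, Continuous fun z : ℝ =>
      z * (1 + z / 2) * (-6 * b * z + b + 1) ^ τ *
        Real.exp ((1 - τ) * (-6 * b * z + b)) := by
    intro b
    have h1 : Continuous fun z : ℝ => (-6 * b * z + b + 1) ^ τ :=
      (Real.continuous_rpow_const hτ0).comp (by continuity)
    exact ((continuous_id.mul (by continuity)).mul h1).mul
      (Real.continuous_exp.comp (by continuity))
  constructor
  · rw [Iint, integral_symm_pair _ (hc (-1 / 7))]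
    apply intervalIntegral_pos_of_pos_on
    · exact (((hc (-1 / 7)).add ((hc (-1 / 7)).comp continuous_neg)).intervalIntegrable _ _)
    · intro x hx
      exact key_neg τ x hτ0 hτ1 hx.1 hx.2
    · norm_num
  · rw [Iint, integral_symm_pair _ (hc (1 / 5))]
    have hpos : 0 < ∫ z in (0:ℝ)..1,
        -(z * (1 + z / 2) * (-6 * (1 / 5) * z + 1 / 5 + 1) ^ τ *
            Real.exp ((1 - τ) * (-6 * (1 / 5) * z + 1 / 5))
          + -z * (1 + -z / 2) * (-6 * (1 / 5) * -z + 1 / 5 + 1) ^ τ *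
            Real.exp ((1 - τ) * (-6 * (1 / 5) * -z + 1 / 5))) := by
      apply intervalIntegral_pos_of_pos_on
      · exact ((((hc (1 / 5)).add ((hc (1 / 5)).comp continuous_neg)).neg).intervalIntegrable _ _)
      · intro x hx
        exact key_pos τ x hτ0 hτ1 hx.1 hx.2
      · norm_num
    rw [intervalIntegral.integral_neg] at hpos
    linarith
end

section
/- For b ∈ ℝ and τ ∈ [0,1] define I_τ(b) := ∫_{−1}^{1} z (1 + z/2) (−6 b z + b + 1)^τ e^{(1−τ)(−6 b z + b)} dz. Then for every τ ∈ [0,1] there exists b ∈ (−1/7, 1/5) such that I_τ(b) = 0. -/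
open Real intervalIntegral

/-- The integrand of `Iint`. -/
noncomputable def Fint (τ b z : ℝ) : ℝ :=
  z * (1 + z / 2) * (-6 * b * z + b + 1) ^ τ * Real.exp ((1 - τ) * (-6 * b * z + b))

lemma Fint_continuous (τ b : ℝ) (hτ0 : 0 ≤ τ) : Continuous (Fint τ b) := by
  unfold Fint
  exact (((continuous_id.mul (by continuity)).mul
    ((Real.continuous_rpow_const hτ0).comp (by continuity))).mul
    (Real.continuous_exp.comp (by continuity)))

/-- Fold the integral over `[-1,1]` into an integral over `[0,1]`. -/
lemma Iint_fold (τ b : ℝ) (hτ0 : 0 ≤ τ) :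
    Iint τ b = ∫ z in (0:ℝ)..1, (Fint τ b z + Fint τ b (-z)) := by
  have hc := Fint_continuous τ b hτ0
  have h1 : IntervalIntegrable (Fint τ b) MeasureTheory.volume (-1) 0 :=
    hc.intervalIntegrable _ _
  have h2 : IntervalIntegrable (Fint τ b) MeasureTheory.volume 0 1 :=
    hc.intervalIntegrable _ _
  have hadd : (∫ z in (0:ℝ)..1, (Fint τ b z + Fint τ b (-z))) =
      (∫ z in (0:ℝ)..1, Fint τ b z) + ∫ z in (0:ℝ)..1, Fint τ b (-z) :=
    intervalIntegral.integral_add h2 ((hc.comp continuous_neg).intervalIntegrable _ _)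
  have hneg : (∫ z in (0:ℝ)..1, Fint τ b (-z)) = ∫ z in (-1:ℝ)..0, Fint τ b z := by
    rw [intervalIntegral.integral_comp_neg (fun z => Fint τ b z)]
    norm_num
  have hI : Iint τ b = ∫ z in (-1:ℝ)..1, Fint τ b z := rfl
  rw [hI, ← intervalIntegral.integral_add_adjacent_intervals h1 h2, hadd, hneg]
  ring

/-- Strict comparison of `x₁^τ * x₂^(1-τ)`. -/
lemma rpow_combo_lt {τ x1 y1 x2 y2 : ℝ} (hτ0 : 0 ≤ τ) (hτ1 : τ ≤ 1)
    (hx1 : 0 < x1) (hx2 : 0 < x2) (h1 : x1 < y1) (h2 : x2 < y2) :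
    x1 ^ τ * x2 ^ (1 - τ) < y1 ^ τ * y2 ^ (1 - τ) := by
  rcases eq_or_lt_of_le hτ0 with h0 | h0
  · rw [← h0]
    simpa using Real.rpow_lt_rpow hx2.le h2 one_pos
  · have hA : x1 ^ τ < y1 ^ τ := Real.rpow_lt_rpow hx1.le h1 h0
    have hB : x2 ^ (1 - τ) ≤ y2 ^ (1 - τ) := Real.rpow_le_rpow hx2.le h2.le (by linarith)
    have hx2p : (0:ℝ) < x2 ^ (1 - τ) := Real.rpow_pos_of_pos hx2 _
    have hy1p : (0:ℝ) ≤ y1 ^ τ := (Real.rpow_pos_of_pos (hx1.trans h1) _).le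
    exact mul_lt_mul hA hB hx2p hy1p

/-- The key factorization `a * B^τ * exp((1-τ)g) = (a*B)^τ * (a*exp g)^(1-τ)` for `a > 0`,
`B ≥ 0`. -/
lemma rpowFactor (τ a B g : ℝ) (ha : 0 < a) (hB : 0 ≤ B) :
    a * B ^ τ * Real.exp ((1 - τ) * g) = (a * B) ^ τ * (a * Real.exp g) ^ (1 - τ) := by
  have ha' : a ^ τ * a ^ (1 - τ) = a := by
    rw [← Real.rpow_add ha]; norm_num
  rw [Real.mul_rpow ha.le hB, Real.mul_rpow ha.le (Real.exp_pos g).le,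
    mul_comm (1 - τ) g, Real.exp_mul]
  calc a * B ^ τ * Real.exp g ^ (1 - τ)
      = (a ^ τ * a ^ (1 - τ)) * B ^ τ * Real.exp g ^ (1 - τ) := by rw [ha']
    _ = a ^ τ * B ^ τ * (a ^ (1 - τ) * Real.exp g ^ (1 - τ)) := by ring

/-- Negativity of the folded integrand at `b = 1/5`. -/
lemma folded_neg (τ z : ℝ) (hτ0 : 0 ≤ τ) (hτ1 : τ ≤ 1) (hz : z ∈ Set.Ioo (0:ℝ) 1) :
    Fint τ (1/5) z + Fint τ (1/5) (-z) < 0 := by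
  obtain ⟨hz0, hz1⟩ := hz
  have key : (1 + z/2) * (-6 * (1/5) * z + 1/5 + 1) ^ τ *
      Real.exp ((1 - τ) * (-6 * (1/5) * z + 1/5)) <
      (1 - z/2) * (-6 * (1/5) * (-z) + 1/5 + 1) ^ τ *
      Real.exp ((1 - τ) * (-6 * (1/5) * (-z) + 1/5)) := by
    have e1 : (-6 * (1/5) * z + 1/5 + 1 : ℝ) = (6 - 6*z)/5 := by ring
    have e2 : (-6 * (1/5) * (-z) + 1/5 + 1 : ℝ) = (6 + 6*z)/5 := by ring
    have e3 : (-6 * (1/5) * z + 1/5 : ℝ) = (1 - 6*z)/5 := by ring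
    have e4 : (-6 * (1/5) * (-z) + 1/5 : ℝ) = (1 + 6*z)/5 := by ring
    rw [e1, e2, e3, e4,
      rpowFactor τ (1 + z/2) ((6 - 6*z)/5) ((1 - 6*z)/5) (by linarith) (by linarith),
      rpowFactor τ (1 - z/2) ((6 + 6*z)/5) ((1 + 6*z)/5) (by linarith) (by linarith)]
    apply rpow_combo_lt hτ0 hτ1
    · nlinarith
    · positivity
    · nlinarith
    · -- (1 + z/2) * exp ((1-6z)/5) < (1 - z/2) * exp ((1+6z)/5)
      have hexp : Real.exp ((1 + 6*z)/5) = Real.exp ((1 - 6*z)/5) * Real.exp ((12*z)/5) := by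
        rw [← Real.exp_add]; ring_nf
      rw [hexp]
      have h1 : (1 : ℝ) + 12*z/5 ≤ Real.exp ((12*z)/5) := by
        have := Real.add_one_le_exp ((12*z)/5); linarith
      have hep : (0:ℝ) < Real.exp ((1 - 6*z)/5) := Real.exp_pos _
      have h2 : (1 + z/2 : ℝ) < (1 - z/2) * (1 + 12*z/5) := by nlinarith
      calc (1 + z/2) * Real.exp ((1 - 6*z)/5)
          < ((1 - z/2) * (1 + 12*z/5)) * Real.exp ((1 - 6*z)/5) := by
            exact mul_lt_mul_of_pos_right h2 hep
        _ = (1 - z/2) * Real.exp ((1 - 6*z)/5) * (1 + 12*z/5) := by ring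
        _ ≤ (1 - z/2) * Real.exp ((1 - 6*z)/5) * Real.exp ((12*z)/5) := by
            have hz2 : (0:ℝ) ≤ (1 - z/2) * Real.exp ((1 - 6*z)/5) := by
              have : (0:ℝ) ≤ 1 - z/2 := by linarith
              positivity
            exact mul_le_mul_of_nonneg_left h1 hz2
        _ = (1 - z/2) * (Real.exp ((1 - 6*z)/5) * Real.exp ((12*z)/5)) := by ring
  have hF : Fint τ (1/5) z + Fint τ (1/5) (-z) =
      z * ((1 + z/2) * (-6 * (1/5) * z + 1/5 + 1) ^ τ *
        Real.exp ((1 - τ) * (-6 * (1/5) * z + 1/5)) -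
      (1 - z/2) * (-6 * (1/5) * (-z) + 1/5 + 1) ^ τ *
        Real.exp ((1 - τ) * (-6 * (1/5) * (-z) + 1/5))) := by
    unfold Fint; ring_nf
  rw [hF]
  have : (1 + z/2) * (-6 * (1/5) * z + 1/5 + 1) ^ τ *
        Real.exp ((1 - τ) * (-6 * (1/5) * z + 1/5)) -
      (1 - z/2) * (-6 * (1/5) * (-z) + 1/5 + 1) ^ τ *
        Real.exp ((1 - τ) * (-6 * (1/5) * (-z) + 1/5)) < 0 := by linarith
  exact mul_neg_of_pos_of_neg hz0 this

/-- Positivity of the folded integrand at `b = -1/7`. -/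
lemma folded_pos (τ z : ℝ) (hτ0 : 0 ≤ τ) (hτ1 : τ ≤ 1) (hz : z ∈ Set.Ioo (0:ℝ) 1) :
    0 < Fint τ (-1/7) z + Fint τ (-1/7) (-z) := by
  obtain ⟨hz0, hz1⟩ := hz
  have e1 : (-6 * (-1/7) * z + -1/7 + 1 : ℝ) = (6 + 6*z)/7 := by ring
  have e2 : (-6 * (-1/7) * (-z) + -1/7 + 1 : ℝ) = (6 - 6*z)/7 := by ring
  have key : (1 - z/2) * (-6 * (-1/7) * (-z) + -1/7 + 1) ^ τ *
      Real.exp ((1 - τ) * (-6 * (-1/7) * (-z) + -1/7)) <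
      (1 + z/2) * (-6 * (-1/7) * z + -1/7 + 1) ^ τ *
      Real.exp ((1 - τ) * (-6 * (-1/7) * z + -1/7)) := by
    rw [e1, e2]
    have hP : ((6 - 6*z)/7 : ℝ) ^ τ ≤ ((6 + 6*z)/7) ^ τ :=
      Real.rpow_le_rpow (by linarith) (by linarith) hτ0
    have hE : Real.exp ((1 - τ) * (-6 * (-1/7) * (-z) + -1/7)) ≤
        Real.exp ((1 - τ) * (-6 * (-1/7) * z + -1/7)) := by
      apply Real.exp_le_exp.mpr
      have : (-6 * (-1/7) * (-z) + -1/7 : ℝ) ≤ -6 * (-1/7) * z + -1/7 := by nlinarith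
      nlinarith [hτ1, this]
    have hPp : (0:ℝ) < ((6 - 6*z)/7 : ℝ) ^ τ :=
      Real.rpow_pos_of_pos (by linarith) _
    have hEp : (0:ℝ) < Real.exp ((1 - τ) * (-6 * (-1/7) * (-z) + -1/7)) := Real.exp_pos _
    have ha : (1 - z/2 : ℝ) < 1 + z/2 := by linarith
    calc (1 - z/2) * ((6 - 6*z)/7) ^ τ * Real.exp ((1 - τ) * (-6 * (-1/7) * (-z) + -1/7))
        < (1 + z/2) * ((6 - 6*z)/7) ^ τ * Real.exp ((1 - τ) * (-6 * (-1/7) * (-z) + -1/7)) := by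
          apply mul_lt_mul_of_pos_right (mul_lt_mul_of_pos_right ha hPp) hEp
      _ ≤ (1 + z/2) * ((6 + 6*z)/7) ^ τ * Real.exp ((1 - τ) * (-6 * (-1/7) * z + -1/7)) := by
          apply mul_le_mul
          · exact mul_le_mul_of_nonneg_left hP (by linarith)
          · exact hE
          · exact hEp.le
          · positivity
  have hF : Fint τ (-1/7) z + Fint τ (-1/7) (-z) =
      z * ((1 + z/2) * (-6 * (-1/7) * z + -1/7 + 1) ^ τ *
        Real.exp ((1 - τ) * (-6 * (-1/7) * z + -1/7)) -
      (1 - z/2) * (-6 * (-1/7) * (-z) + -1/7 + 1) ^ τ *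
        Real.exp ((1 - τ) * (-6 * (-1/7) * (-z) + -1/7))) := by
    unfold Fint; ring_nf
  rw [hF]
  exact mul_pos hz0 (by linarith)

lemma Iint_at_fifth_neg (τ : ℝ) (hτ0 : 0 ≤ τ) (hτ1 : τ ≤ 1) : Iint τ (1/5) < 0 := by
  rw [Iint_fold τ (1/5) hτ0]
  have hc := Fint_continuous τ (1/5) hτ0
  have hci : Continuous fun z => -(Fint τ (1/5) z + Fint τ (1/5) (-z)) :=
    (hc.add (hc.comp continuous_neg)).neg
  have hpos := intervalIntegral_pos_of_pos_on (f := fun z => -(Fint τ (1/5) z + Fint τ (1/5) (-z)))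
    (hci.intervalIntegrable _ _)
    (fun z hz => by simpa using neg_pos.mpr (folded_neg τ z hτ0 hτ1 hz)) one_pos
  rw [intervalIntegral.integral_neg] at hpos
  linarith

lemma Iint_at_negseventh_pos (τ : ℝ) (hτ0 : 0 ≤ τ) (hτ1 : τ ≤ 1) : 0 < Iint τ (-1/7) := by
  rw [Iint_fold τ (-1/7) hτ0]
  have hc := Fint_continuous τ (-1/7) hτ0
  exact intervalIntegral_pos_of_pos_on
    ((hc.add (hc.comp continuous_neg)).intervalIntegrable _ _)
    (fun z hz => folded_pos τ z hτ0 hτ1 hz) one_pos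

lemma Iint_continuous (τ : ℝ) (hτ0 : 0 ≤ τ) : Continuous fun b => Iint τ b := by
  have hf : Continuous (Function.uncurry fun b z : ℝ =>
      z * (1 + z / 2) * (-6 * b * z + b + 1) ^ τ * Real.exp ((1 - τ) * (-6 * b * z + b))) := by
    apply Continuous.mul
    · apply Continuous.mul
      · continuity
      · exact (Real.continuous_rpow_const hτ0).comp (by continuity)
    · exact Real.continuous_exp.comp (by continuity)
  exact intervalIntegral.continuous_parametric_intervalIntegral_of_continuous' hf (-1) 1

/-- Example 7.1. For every `τ ∈ [0,1]` there is `b ∈ (−1/7, 1/5)`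
with `I_τ(b) = 0`; i.e. the barycenter condition of Theorem A holds, so
`ℙ(𝒪_{ℙ¹}(1) ⊕ 𝒪_{ℙ¹})` carries a multiplier Hermitian–Einstein metric of type
`(σ_τ, V_τ)` for every `τ`. -/
theorem statement17 (τ : ℝ) (hτ : τ ∈ Set.Icc (0 : ℝ) 1) :
    ∃ b ∈ Set.Ioo (-1 / 7 : ℝ) (1 / 5), Iint τ b = 0 := by
  obtain ⟨hτ0, hτ1⟩ := hτ
  have hle : (-1/7 : ℝ) ≤ 1/5 := by norm_num
  have hIVT := intermediate_value_Ioo' (f := fun b => Iint τ b) hle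
    ((Iint_continuous τ hτ0).continuousOn)
  have h0 : (0:ℝ) ∈ Set.Ioo (Iint τ (1/5)) (Iint τ (-1/7)) :=
    ⟨Iint_at_fifth_neg τ hτ0 hτ1, Iint_at_negseventh_pos τ hτ0 hτ1⟩
  obtain ⟨b, hb, hb0⟩ := hIVT h0
  exact ⟨b, hb, hb0⟩
end
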